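/- arXiv:2112.14306 — 9 statements merged into one kernel-verified Lean document; each statement's English description precedes it below -/
import Mathlib

section
/- Let P ∈ ℤ[X] be a monic polynomial of degree 2d (d ≥ 1) such that every complex root z of P is non-real and satisfies |z| = sqrt(q). Then the coefficients of P satisfy the functional equation P.coeff(m) = q^(d−m) · P.coeff(2d−m) for every m with 0 ≤ m ≤ d; equivalently, X^(2d) · P(q/X) = q^d · P(X) as rational functions. In particular q^j divides the coefficient of X^(d−j) for 1 ≤ j ≤ d. -/
/-!
For a monic `f` of degree `n` with roots `zᵢ`, the polynomial `X ^ n f(c / X)` (in Lean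
`reflect n (f.comp (C c * X))`) equals `∏ (c - zᵢ X) = ∏ (-zᵢ) · ∏ (X - c / zᵢ)`. When `z ↦ c / z`
permutes the roots, this is `f(0) · f`, so `f.coeff (n - m) * c ^ (n - m) = f(0) * f.coeff m`.
For a Weil polynomial `z ↦ q / z` is complex conjugation on the roots. Taking `m = 0` gives
`f(0) ^ 2 = q ^ (2d)`, and `f(0) > 0` since a monic real polynomial without real roots is positive,
so `f(0) = q ^ d`.
-/

open Polynomial

theorem Polynomial.reflect_card_comp_C_mul_X_prod_X_sub_C {R : Type*} [CommRing R] [Nontrivial R]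
    (s : Multiset R) (c : R) :
    reflect (Multiset.card s) ((s.map fun z => X - C z).prod.comp (C c * X)) =
      (s.map fun z => C c - C z * X).prod := by
  have hcX : (C c * X).natDegree ≤ 1 := by simpa using natDegree_C_mul_X_pow_le c 1
  induction s using Multiset.induction_on with
  | empty => simp
  | cons a s ih =>
    have hdeg : ((s.map fun z => X - C z).prod.comp (C c * X)).natDegree ≤ Multiset.card s :=
      natDegree_comp_le.trans <| by
        rw [natDegree_multiset_prod_X_sub_C_eq_card]
        exact (Nat.mul_le_mul_left _ hcX).trans_eq (mul_one _)
    have hlin : ((X - C a).comp (C c * X)).natDegree ≤ 1 := by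
      simpa using natDegree_sub_le_of_le hcX (natDegree_C a).le
    rw [Multiset.map_cons, Multiset.prod_cons, mul_comp, Multiset.card_cons, add_comm,
      reflect_mul _ _ hlin hdeg, ih, Multiset.map_cons, Multiset.prod_cons]
    congr 1
    simp [reflect_sub, reflect_C]

section Field

variable {K : Type*} [Field K]

theorem Polynomial.prod_C_sub_C_mul_X_of_map_div_eq {s : Multiset K} {c : K} (h0 : (0 : K) ∉ s)
    (hs : s.map (c / ·) = s) :
    (s.map fun z => C c - C z * X).prod =
      C ((-1) ^ Multiset.card s * s.prod) * (s.map fun z => X - C z).prod := by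
  have hfactor : (s.map fun z => C c - C z * X) = s.map fun z => C (-z) * (X - C (c / z)) :=
    Multiset.map_congr rfl fun z hz => by
      rw [mul_sub, ← C_mul, neg_mul, mul_div_cancel₀ c (ne_of_mem_of_not_mem hz h0), map_neg,
        map_neg]
      ring
  calc (s.map fun z => C c - C z * X).prod
      = C (s.map Neg.neg).prod * ((s.map (c / ·)).map fun z => X - C z).prod := by
        rw [hfactor, Multiset.prod_map_mul, map_multiset_prod, Multiset.map_map, Multiset.map_map]
        rfl
    _ = _ := by rw [hs, Multiset.prod_map_neg]

theorem Polynomial.Splits.reflect_comp_C_mul_X_eq {f : K[X]} (hsplit : f.Splits) (hmonic : f.Monic)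
    {c : K} (h0 : (0 : K) ∉ f.roots) (hroots : f.roots.map (c / ·) = f.roots) :
    reflect f.natDegree (f.comp (C c * X)) = C (f.coeff 0) * f := by
  have hf := hsplit.eq_prod_roots_of_monic hmonic
  calc reflect f.natDegree (f.comp (C c * X))
      = reflect (Multiset.card f.roots) ((f.roots.map fun z => X - C z).prod.comp (C c * X)) := by
        rw [← hf, hsplit.natDegree_eq_card_roots]
    _ = C (f.coeff 0) * f := by
        rw [reflect_card_comp_C_mul_X_prod_X_sub_C, prod_C_sub_C_mul_X_of_map_div_eq h0 hroots, ← hf,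
          hsplit.coeff_zero_eq_prod_roots_of_monic hmonic, hsplit.natDegree_eq_card_roots]

theorem Polynomial.Splits.coeff_natDegree_sub_mul_pow {f : K[X]} (hsplit : f.Splits)
    (hmonic : f.Monic) {c : K} (h0 : (0 : K) ∉ f.roots) (hroots : f.roots.map (c / ·) = f.roots)
    {m : ℕ} (hm : m ≤ f.natDegree) :
    f.coeff (f.natDegree - m) * c ^ (f.natDegree - m) = f.coeff 0 * f.coeff m := by
  simpa [coeff_reflect, revAt_le hm] using
    congr_arg (coeff · m) (hsplit.reflect_comp_C_mul_X_eq hmonic h0 hroots)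

end Field

theorem Complex.conj_eq_sq_norm_div (z : ℂ) : (starRingEnd ℂ) z = ‖z‖ ^ 2 / z := by
  rcases eq_or_ne z 0 with rfl | hz
  · simp
  · rw [eq_div_iff hz, mul_comm, Complex.mul_conj']

theorem Polynomial.map_conj_aroots_complex (p : ℝ[X]) :
    (p.aroots ℂ).map (starRingEnd ℂ) = p.aroots ℂ := by
  have hconj : (starRingEnd ℂ).comp (algebraMap ℝ ℂ) = algebraMap ℝ ℂ :=
    RingHom.ext Complex.conj_ofReal
  rw [aroots_def, ← (IsAlgClosed.splits _).roots_map, map_map, hconj]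

theorem Polynomial.map_div_aroots_complex_of_sq_norm_eq (p : ℝ[X]) {c : ℝ}
    (hnorm : ∀ z ∈ p.aroots ℂ, ‖z‖ ^ 2 = c) :
    (p.aroots ℂ).map ((c : ℂ) / ·) = p.aroots ℂ := by
  conv_rhs => rw [← map_conj_aroots_complex p]
  refine Multiset.map_congr rfl fun z hz => ?_
  rw [Complex.conj_eq_sq_norm_div, ← hnorm z hz, Complex.ofReal_pow]

theorem Polynomial.Monic.coeff_zero_pos_of_forall_not_isRoot {p : ℝ[X]} (hmonic : p.Monic)
    (hroots : ∀ x, ¬ p.IsRoot x) : 0 < p.coeff 0 := by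
  rw [coeff_zero_eq_eval_zero]
  exact zero_lt_eval_of_roots_lt_of_leadingCoeff_nonneg (fun y hy => (hroots y hy).elim)
    (hmonic.leadingCoeff ▸ zero_le_one)

theorem Polynomial.Monic.coeff_natDegree_sub_mul_pow_of_sq_norm_eq {P : ℤ[X]} (hmonic : P.Monic)
    {c : ℤ} (hc : c ≠ 0) (hnorm : ∀ z ∈ P.aroots ℂ, ‖z‖ ^ 2 = c) {m : ℕ} (hm : m ≤ P.natDegree) :
    P.coeff (P.natDegree - m) * c ^ (P.natDegree - m) = P.coeff 0 * P.coeff m := by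
  have hzero : (0 : ℂ) ∉ P.aroots ℂ := fun h => hc <| by simpa [eq_comm] using hnorm 0 h
  have hstable : (P.aroots ℂ).map ((c : ℂ) / ·) = P.aroots ℂ := by
    have := (P.map (algebraMap ℤ ℝ)).map_div_aroots_complex_of_sq_norm_eq (c := c) fun z hz =>
      hnorm z (by rwa [aroots_map] at hz)
    rwa [aroots_map, Complex.ofReal_intCast] at this
  have := (IsAlgClosed.splits (P.map (algebraMap ℤ ℂ))).coeff_natDegree_sub_mul_pow
    (hmonic.map _) hzero hstable (m := m) (by rwa [hmonic.natDegree_map])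
  simp only [hmonic.natDegree_map, coeff_map, eq_intCast] at this
  exact_mod_cast this

theorem Polynomial.Monic.coeff_eq_pow_mul_coeff_of_coeff_mul_pow_eq {R : Type*} [CommRing R]
    [LinearOrder R] [IsStrictOrderedRing R] {P : R[X]} (hmonic : P.Monic) {d : ℕ}
    (hdeg : P.natDegree = 2 * d) {c : R} (hc : 0 < c) (hpos : 0 < P.coeff 0)
    (hrec : ∀ m ≤ 2 * d, P.coeff (2 * d - m) * c ^ (2 * d - m) = P.coeff 0 * P.coeff m)
    {m : ℕ} (hm : m ≤ d) :
    P.coeff m = c ^ (d - m) * P.coeff (2 * d - m) := by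
  have hcoeff_zero : P.coeff 0 = c ^ d := by
    have hsq : P.coeff 0 ^ 2 = (c ^ d) ^ 2 := by
      have := hrec 0 (Nat.zero_le _)
      rw [Nat.sub_zero, ← hdeg, hmonic.coeff_natDegree, hdeg, one_mul] at this
      rw [sq, ← this, ← pow_mul, mul_comm]
    exact (pow_left_inj₀ hpos.le (pow_nonneg hc.le d) two_ne_zero).mp hsq
  refine mul_left_cancel₀ (pow_ne_zero d hc.ne') ?_
  have h := hrec m (by omega)
  have hsub : 2 * d - m = d + (d - m) := by omega
  rw [hcoeff_zero, hsub, pow_add] at h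
  rw [hsub]
  linear_combination -h

theorem stmt_2_general (p r : ℕ) (hp : p.Prime) (q : ℕ) (hq : q = p ^ r)
    (d : ℕ) (P : Polynomial ℤ) (hmonic : P.Monic) (hdeg : P.natDegree = 2 * d)
    (hroots : ∀ z : ℂ, Polynomial.aeval z P = 0 →
      z.im ≠ 0 ∧ ‖z‖ = Real.sqrt q) :
    (∀ m : ℕ, m ≤ d → P.coeff m = (q : ℤ) ^ (d - m) * P.coeff (2 * d - m)) ∧
    (∀ j : ℕ, 1 ≤ j → j ≤ d → (q : ℤ) ^ j ∣ P.coeff (d - j)) := by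
  have hq0 : (0 : ℤ) < q := by exact_mod_cast hq ▸ pow_pos hp.pos r
  have hrec := fun m => hmonic.coeff_natDegree_sub_mul_pow_of_sq_norm_eq hq0.ne' (m := m)
    fun z hz => by
      rw [(hroots z (mem_aroots'.mp hz).2).2, Real.sq_sqrt (Nat.cast_nonneg q), Int.cast_natCast]
  rw [hdeg] at hrec
  have hno_real_root : ∀ x : ℝ, ¬ (P.map (algebraMap ℤ ℝ)).IsRoot x := fun x hx => by
    rw [IsRoot, eval_map_algebraMap] at hx
    refine (hroots x ?_).1 (Complex.ofReal_im x)
    rw [← Complex.coe_algebraMap, aeval_algebraMap_apply, hx, map_zero]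
  have hpos : 0 < P.coeff 0 := by
    simpa using (hmonic.map (algebraMap ℤ ℝ)).coeff_zero_pos_of_forall_not_isRoot hno_real_root
  have hfunctional := fun m hm =>
    hmonic.coeff_eq_pow_mul_coeff_of_coeff_mul_pow_eq hdeg hq0 hpos hrec (m := m) hm
  refine ⟨hfunctional, fun j _ hjd => ?_⟩
  rw [hfunctional (d - j) (Nat.sub_le d j), Nat.sub_sub_self hjd]
  exact dvd_mul_right _ _

/-- Let `P ∈ ℤ[X]` be monic of degree `2d` (`d ≥ 1`) such that every complex root `z` of `P`
is non-real and satisfies `|z| = √q` (with `q = p ^ r`, `p` prime, `r ≥ 1`).  Then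
`P.coeff m = q ^ (d - m) * P.coeff (2d - m)` for all `0 ≤ m ≤ d`; in particular
`q ^ j` divides the coefficient of `X ^ (d - j)` for `1 ≤ j ≤ d`. -/
theorem stmt_2 (p r : ℕ) (hp : p.Prime) (hr : 1 ≤ r) (q : ℕ) (hq : q = p ^ r)
    (d : ℕ) (hd : 1 ≤ d) (P : Polynomial ℤ) (hmonic : P.Monic) (hdeg : P.natDegree = 2 * d)
    (hroots : ∀ z : ℂ, Polynomial.aeval z P = 0 →
      z.im ≠ 0 ∧ ‖z‖ = Real.sqrt q) :
    (∀ m : ℕ, m ≤ d → P.coeff m = (q : ℤ) ^ (d - m) * P.coeff (2 * d - m)) ∧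
    (∀ j : ℕ, 1 ≤ j → j ≤ d → (q : ℤ) ^ j ∣ P.coeff (d - j)) :=
  stmt_2_general p r hp q hq d P hmonic hdeg hroots
end

section
/- Let P ∈ ℤ[X] be a monic polynomial of degree 2d (d ≥ 1) such that every complex root z of P is non-real and satisfies |z| = sqrt(q). Then there exist unique integers c_0, …, c_d and e_1, …, e_d with c_d = 1 such that, in the Laurent polynomial ring ℤ[T, T⁻¹], one has T^d · ( Σ_{i=0}^{d} c_i T^i + Σ_{j=1}^{d} e_j (q T⁻¹)^j ) = P(T). Moreover e_j = c_j for all 1 ≤ j ≤ d. (Thus the symmetric polynomial h(F,V) = Σ c_i F^i + Σ e_j V^j associated to P has integer coefficients: h ∈ ℤ[F,V] with P(X) = X^d · h(X, q/X).) -/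
/-!
The roots of `P` are stable under complex conjugation and none of them is real, so they split as
`S + conj S`. Since `z * conj z = q`, each pair satisfies
`x² (q/x - z)(q/x - conj z) = q (x - z)(x - conj z)`, whence `X^{2d} P(q/X) = q^d P(X)`, i.e.
`a_{d-k} = q^k a_{d+k}` for the coefficients `a` of `P`.

Multiplied out, the Laurent identity says that the polynomial `X^d h(X, q/X)` has coefficient
`c_i` at `X^{d+i}` and `q^j e_j` at `X^{d-j}`. Hence `c_i = a_{d+i}` and
`q^j e_j = a_{d-j} = q^j a_{d+j}` are forced, and by the same reciprocity this choice is a solution.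
As `q^d` is the product of the `|z|² ≠ 0`, it does not vanish, which gives `e_j = a_{d+j} = c_j`.
-/

open LaurentPolynomial in
/-- The defining property of the coefficient data `(c, e)` of the symmetric polynomial
associated to `P`: `c_d = 1` and
`T^d * (Σ_{i=0}^{d} c_i T^i + Σ_{j=1}^{d} e_j (q T⁻¹)^j) = P(T)` in `ℤ[T, T⁻¹]`,
where `e j` encodes `e_{j+1}`. -/
def SymmetricCoeffData (q d : ℕ) (P : Polynomial ℤ)
    (ce : (Fin (d + 1) → ℤ) × (Fin d → ℤ)) : Prop :=
  ce.1 (Fin.last d) = 1 ∧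
    T (d : ℤ) *
        ((∑ i : Fin (d + 1), C (ce.1 i) * T ((i : ℕ) : ℤ)) +
          ∑ j : Fin d, C (ce.2 j) * ((q : LaurentPolynomial ℤ) * T (-1)) ^ ((j : ℕ) + 1)) =
      Polynomial.toLaurent P

section RootPairing

open Polynomial ComplexConjugate

theorem Multiset.exists_eq_add_map_conj {R : Multiset ℂ} (hconj : R.map conj = R)
    (hR : ∀ z ∈ R, z.im ≠ 0) : ∃ S : Multiset ℂ, R = S + S.map conj := by
  refine ⟨R.filter (0 < ·.im), ?_⟩
  have hlower : R.filter (·.im < 0) = (R.filter (0 < ·.im)).map conj := by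
    conv_lhs => rw [← hconj]
    simp only [Multiset.filter_map, Function.comp_def, Complex.conj_im, neg_lt_zero]
  rw [← hlower]
  conv_lhs => rw [← Multiset.filter_add_not (0 < ·.im) R]
  congr 1
  exact Multiset.filter_congr fun z hz => not_lt.trans (hR z hz).le_iff_lt

theorem eval_prod_X_sub_C_add_map_conj (S : Multiset ℂ) (y : ℂ) :
    ((S + S.map conj).map fun z => X - C z).prod.eval y =
      (S.map fun z => (y - z) * (y - conj z)).prod := by
  simp [eval_multiset_prod, Multiset.prod_map_mul]

theorem pow_mul_eval_div_prod_X_sub_C_add_map_conj {S : Multiset ℂ} {q : ℂ}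
    (hS : ∀ z ∈ S, z * conj z = q) {x : ℂ} (hx : x ≠ 0) :
    x ^ (2 * Multiset.card S) * ((S + S.map conj).map fun z => X - C z).prod.eval (q / x) =
      q ^ Multiset.card S * ((S + S.map conj).map fun z => X - C z).prod.eval x := by
  simp only [eval_prod_X_sub_C_add_map_conj]
  calc x ^ (2 * Multiset.card S) * (S.map fun z => (q / x - z) * (q / x - conj z)).prod
      = (S.map fun z => x ^ 2 * ((q / x - z) * (q / x - conj z))).prod := by
        rw [Multiset.prod_map_mul (f := fun _ => x ^ 2), Multiset.map_const',
          Multiset.prod_replicate, pow_mul]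
    _ = (S.map fun z => q * ((x - z) * (x - conj z))).prod := by
        refine congrArg _ (Multiset.map_congr rfl fun z hz => ?_)
        rw [← hS z hz]
        field_simp
        ring
    _ = q ^ Multiset.card S * (S.map fun z => (x - z) * (x - conj z)).prod := by
        rw [Multiset.prod_map_mul (f := fun _ => q), Multiset.map_const', Multiset.prod_replicate]

theorem Polynomial.pow_sub_mul_coeff_sub_of_eval {K : Type*} [Field K] [Infinite K] {f : K[X]}
    {N k : ℕ} {q : K} (hf : f.natDegree ≤ N)
    (h : ∀ x ≠ 0, x ^ N * f.eval (q / x) = q ^ k * f.eval x) {m : ℕ} (hm : m ≤ N) :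
    q ^ (N - m) * f.coeff (N - m) = q ^ k * f.coeff m := by
  have hdeg : (f.comp (C q * X)).natDegree ≤ N :=
    natDegree_comp_le.trans <| by
      nlinarith [natDegree_C_mul_le q (X : K[X]), natDegree_X_le (R := K)]
  -- `reflect N (f.comp (C q * X))` is `X^N f(q/X)`.
  have hrefl : reflect N (f.comp (C q * X)) = C (q ^ k) * f := by
    refine eq_of_infinite_eval_eq _ _ ((Set.finite_singleton 0).infinite_compl.mono fun x hx => ?_)
    have hx : x ≠ 0 := hx
    let : Invertible x⁻¹ := invertibleOfNonzero (inv_ne_zero hx)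
    have := eval₂_reflect_mul_pow (RingHom.id K) x⁻¹ N _ hdeg
    simp only [invOf_eq_inv, inv_inv, eval₂_id, eval_comp, eval_mul, eval_C, eval_X] at this
    simp only [Set.mem_ofPred_eq, eval_mul, eval_C, ← h x hx, ← this, inv_pow, div_eq_mul_inv]
    field_simp
  have := congrArg (coeff · m) hrefl
  simp only [coeff_reflect, revAt_le hm, comp_C_mul_X_coeff, coeff_C_mul] at this
  rw [← this, mul_comm]

theorem Polynomial.exists_map_eq_prod_conj_pairs {P : ℤ[X]} (hmonic : P.Monic) {q d : ℕ}
    (hdeg : P.natDegree = 2 * d)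
    (hroots : ∀ z : ℂ, aeval z P = 0 → z.im ≠ 0 ∧ ‖z‖ = Real.sqrt q) :
    ∃ S : Multiset ℂ, Multiset.card S = d ∧
      P.map (algebraMap ℤ ℂ) = ((S + S.map conj).map fun z => X - C z).prod ∧
      ∀ z ∈ S, z ≠ 0 ∧ z * conj z = q := by
  set Q := P.map (algebraMap ℤ ℂ)
  have hQ : Q.Monic := hmonic.map _
  have hsplits : Q.Splits := IsAlgClosed.splits Q
  have hconj : Q.roots.map conj = Q.roots := by
    rw [← hsplits.roots_map, Polynomial.map_map, Subsingleton.elim ((starRingEnd ℂ).comp _)]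
  have hroots' : ∀ z ∈ Q.roots, z.im ≠ 0 ∧ ‖z‖ = Real.sqrt q := fun z hz =>
    hroots z (by rw [← eval_map_algebraMap]; exact (mem_roots hQ.ne_zero).mp hz)
  obtain ⟨S, hS⟩ := Multiset.exists_eq_add_map_conj hconj fun z hz => (hroots' z hz).1
  have hprod : Q = ((S + S.map conj).map fun z => X - C z).prod :=
    hS ▸ hsplits.eq_prod_roots_of_monic hQ
  refine ⟨S, ?_, hprod, fun z hz => ?_⟩
  · have := congrArg natDegree hprod
    rw [hmonic.natDegree_map, hdeg, natDegree_multiset_prod_X_sub_C_eq_card, Multiset.card_add,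
      Multiset.card_map] at this
    omega
  obtain ⟨him, hnorm⟩ := hroots' z (hS ▸ Multiset.mem_add.mpr (.inl hz))
  refine ⟨fun h => him (by simp [h]), ?_⟩
  rw [Complex.mul_conj, Complex.normSq_eq_norm_sq, hnorm, Real.sq_sqrt q.cast_nonneg]
  norm_cast

theorem Polynomial.pow_ne_zero_of_roots_norm_eq_sqrt {P : ℤ[X]} (hmonic : P.Monic) {q d : ℕ}
    (hdeg : P.natDegree = 2 * d)
    (hroots : ∀ z : ℂ, aeval z P = 0 → z.im ≠ 0 ∧ ‖z‖ = Real.sqrt q) :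
    (q : ℤ) ^ d ≠ 0 := by
  obtain ⟨S, rfl, -, hS⟩ := exists_map_eq_prod_conj_pairs hmonic hdeg hroots
  have : ((q : ℤ) : ℂ) ^ Multiset.card S = (S.map fun z => z * conj z).prod := by
    rw [Multiset.map_congr rfl fun z hz => (hS z hz).2, Multiset.map_const',
      Multiset.prod_replicate, Int.cast_natCast]
  exact_mod_cast this ▸ Multiset.prod_ne_zero fun h => by
    obtain ⟨z, hz, hz0⟩ := Multiset.mem_map.mp h
    exact mul_ne_zero (hS z hz).1 ((_root_.map_ne_zero _).mpr (hS z hz).1) hz0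

theorem Polynomial.coeff_sub_eq_pow_mul_coeff_add {P : ℤ[X]} (hmonic : P.Monic) {q d : ℕ}
    (hdeg : P.natDegree = 2 * d)
    (hroots : ∀ z : ℂ, aeval z P = 0 → z.im ≠ 0 ∧ ‖z‖ = Real.sqrt q) {k : ℕ} (hk : k ≤ d) :
    P.coeff (d - k) = q ^ k * P.coeff (d + k) := by
  obtain ⟨S, hcard, hQ, hS⟩ := exists_map_eq_prod_conj_pairs hmonic hdeg hroots
  have heval : ∀ x : ℂ, x ≠ 0 → x ^ (2 * d) * (P.map (algebraMap ℤ ℂ)).eval (q / x) =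
      q ^ d * (P.map (algebraMap ℤ ℂ)).eval x := fun x hx => by
    rw [hQ, ← hcard]
    exact pow_mul_eval_div_prod_X_sub_C_add_map_conj (fun z hz => (hS z hz).2) hx
  have h := pow_sub_mul_coeff_sub_of_eval
    ((hmonic.natDegree_map (algebraMap ℤ ℂ)).trans hdeg).le heval (m := d - k) (by omega)
  rw [show 2 * d - (d - k) = d + k by omega, pow_add, mul_assoc, coeff_map, coeff_map,
    algebraMap_int_eq, eq_intCast, eq_intCast] at h
  have h' : (q : ℤ) ^ d * ((q : ℤ) ^ k * P.coeff (d + k)) = (q : ℤ) ^ d * P.coeff (d - k) := by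
    exact_mod_cast h
  exact (mul_left_cancel₀ (pow_ne_zero_of_roots_norm_eq_sqrt hmonic hdeg hroots) h').symm

end RootPairing

/-- The polynomial `X^d · h(X, q/X)` for `h = Σ cᵢ Fⁱ + Σ eⱼ Vʲ`, where `ce = (c, e)` and
`ce.2 j` stands for `e_{j+1}`; the exponent `d - 1 - j` does not truncate since `j < d`. -/
noncomputable def symmetricCoeffPoly (q d : ℕ) (ce : (Fin (d + 1) → ℤ) × (Fin d → ℤ)) :
    Polynomial ℤ :=
  ∑ i : Fin (d + 1), .C (ce.1 i) * .X ^ (d + (i : ℕ)) +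
    ∑ j : Fin d, .C (ce.2 j * (q : ℤ) ^ ((j : ℕ) + 1)) * .X ^ (d - 1 - (j : ℕ))

open LaurentPolynomial in
theorem toLaurent_symmetricCoeffPoly (q d : ℕ) (ce : (Fin (d + 1) → ℤ) × (Fin d → ℤ)) :
    Polynomial.toLaurent (symmetricCoeffPoly q d ce) =
      T (d : ℤ) * ((∑ i : Fin (d + 1), C (ce.1 i) * T ((i : ℕ) : ℤ)) +
        ∑ j : Fin d, C (ce.2 j) * ((q : LaurentPolynomial ℤ) * T (-1)) ^ ((j : ℕ) + 1)) := by
  simp only [symmetricCoeffPoly, map_add, map_sum, Polynomial.toLaurent_C_mul_X_pow, mul_add,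
    Finset.mul_sum]
  congr 1
  · refine Finset.sum_congr rfl fun i _ => ?_
    rw [mul_left_comm, ← T_add]
    push_cast; rfl
  · refine Finset.sum_congr rfl fun j _ => ?_
    have : ((d - 1 - (j : ℕ) : ℕ) : ℤ) = d + ((j : ℕ) + 1 : ℕ) * -1 := by omega
    rw [map_mul, map_pow, map_natCast, this, T_add, mul_pow, T_pow]
    ring

theorem symmetricCoeffData_iff {q d : ℕ} {P : Polynomial ℤ}
    {ce : (Fin (d + 1) → ℤ) × (Fin d → ℤ)} :
    SymmetricCoeffData q d P ce ↔ ce.1 (Fin.last d) = 1 ∧ symmetricCoeffPoly q d ce = P := by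
  rw [SymmetricCoeffData, ← toLaurent_symmetricCoeffPoly, Polynomial.toLaurent_inj]

section CoeffData

open Polynomial

variable {q d : ℕ}

theorem coeff_symmetricCoeffPoly_add (ce : (Fin (d + 1) → ℤ) × (Fin d → ℤ))
    (i : Fin (d + 1)) :
    (symmetricCoeffPoly q d ce).coeff (d + i) = ce.1 i := by
  simp only [symmetricCoeffPoly, coeff_add, finsetSum_coeff, coeff_C_mul_X_pow]
  rw [Finset.sum_eq_single i (fun i' _ h => if_neg fun h' => h (Fin.ext (by omega))) (by simp),
    if_pos rfl, Finset.sum_eq_zero fun j _ => if_neg (by omega), add_zero]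

theorem coeff_symmetricCoeffPoly_sub (ce : (Fin (d + 1) → ℤ) × (Fin d → ℤ)) (j : Fin d) :
    (symmetricCoeffPoly q d ce).coeff (d - 1 - j) = ce.2 j * (q : ℤ) ^ ((j : ℕ) + 1) := by
  simp only [symmetricCoeffPoly, coeff_add, finsetSum_coeff, coeff_C_mul_X_pow]
  rw [Finset.sum_eq_single j (fun j' _ h => if_neg fun h' => h (Fin.ext (by omega))) (by simp),
    if_pos rfl, Finset.sum_eq_zero fun i _ => if_neg (by omega), zero_add]

def coeffDataOf (d : ℕ) (P : ℤ[X]) : (Fin (d + 1) → ℤ) × (Fin d → ℤ) :=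
  (fun i => P.coeff (d + (i : ℕ)), fun j => P.coeff (d + ((j : ℕ) + 1)))

theorem symmetricCoeffPoly_eq {P : ℤ[X]} (hdeg : P.natDegree = 2 * d)
    (hrec : ∀ k ≤ d, P.coeff (d - k) = q ^ k * P.coeff (d + k)) :
    symmetricCoeffPoly q d (coeffDataOf d P) = P := by
  calc symmetricCoeffPoly q d (coeffDataOf d P)
      = ∑ i ∈ Finset.range (d + 1), C (P.coeff (d + i)) * X ^ (d + i) +
          ∑ j ∈ Finset.range d, C (P.coeff (d - 1 - j)) * X ^ (d - 1 - j) := by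
        rw [← Fin.sum_univ_eq_sum_range (fun i => C (P.coeff (d + i)) * X ^ (d + i)),
          ← Fin.sum_univ_eq_sum_range (fun j => C (P.coeff (d - 1 - j)) * X ^ (d - 1 - j))]
        unfold symmetricCoeffPoly coeffDataOf
        congr 1
        refine Finset.sum_congr rfl fun j _ => ?_
        dsimp only
        rw [mul_comm (P.coeff _), ← hrec _ j.isLt, show d - ((j : ℕ) + 1) = d - 1 - j by omega]
    _ = ∑ k ∈ Finset.range (2 * d + 1), C (P.coeff k) * X ^ k := by
        rw [Finset.sum_range_reflect (fun k => C (P.coeff k) * X ^ k) d,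
          show 2 * d + 1 = d + (d + 1) by omega,
          Finset.sum_range_add (fun k => C (P.coeff k) * X ^ k) d (d + 1), add_comm]
    _ = P := (hdeg ▸ P.as_sum_range_C_mul_X_pow).symm

theorem eq_coeffDataOf_of_symmetricCoeffPoly_eq {P : ℤ[X]} (hq : (q : ℤ) ^ d ≠ 0)
    (hrec : ∀ k ≤ d, P.coeff (d - k) = q ^ k * P.coeff (d + k))
    {ce : (Fin (d + 1) → ℤ) × (Fin d → ℤ)} (h : symmetricCoeffPoly q d ce = P) :
    ce = coeffDataOf d P := by
  refine Prod.ext (funext fun i => ?_) (funext fun j => ?_)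
  · rw [← h]
    exact (coeff_symmetricCoeffPoly_add ce i).symm
  · have hqj : (q : ℤ) ^ ((j : ℕ) + 1) ≠ 0 := pow_ne_zero _ (ne_zero_pow j.pos.ne' hq)
    refine mul_right_cancel₀ hqj ?_
    rw [← coeff_symmetricCoeffPoly_sub, h, show d - 1 - j = d - ((j : ℕ) + 1) by omega,
      hrec _ j.isLt, mul_comm]
    rfl

end CoeffData

theorem stmt_3_general (q : ℕ) (d : ℕ) (P : Polynomial ℤ) (hmonic : P.Monic) (hdeg : P.natDegree = 2 * d)
    (hroots : ∀ z : ℂ, Polynomial.aeval z P = 0 →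
      z.im ≠ 0 ∧ ‖z‖ = Real.sqrt q) :
    (∃! ce : (Fin (d + 1) → ℤ) × (Fin d → ℤ), SymmetricCoeffData q d P ce) ∧
    (∀ ce : (Fin (d + 1) → ℤ) × (Fin d → ℤ), SymmetricCoeffData q d P ce →
      ∀ j : Fin d, ce.2 j = ce.1 j.succ) := by
  have hrec : ∀ k ≤ d, P.coeff (d - k) = q ^ k * P.coeff (d + k) := fun _ hk =>
    P.coeff_sub_eq_pow_mul_coeff_add hmonic hdeg hroots hk
  have hexists : SymmetricCoeffData q d P (coeffDataOf d P) := by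
    refine symmetricCoeffData_iff.mpr ⟨?_, symmetricCoeffPoly_eq hdeg hrec⟩
    simpa [coeffDataOf, ← two_mul, hdeg] using hmonic.coeff_natDegree
  have hunique : ∀ ce, SymmetricCoeffData q d P ce → ce = coeffDataOf d P := fun _ h =>
    eq_coeffDataOf_of_symmetricCoeffPoly_eq
      (P.pow_ne_zero_of_roots_norm_eq_sqrt hmonic hdeg hroots) hrec (symmetricCoeffData_iff.mp h).2
  refine ⟨⟨_, hexists, hunique⟩, fun ce h j => ?_⟩
  rw [hunique ce h]
  rfl

/-- Let `P ∈ ℤ[X]` be monic of degree `2d` (`d ≥ 1`) all of whose complex roots are non-real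
of absolute value `√q`.  Then there exist unique integers `c_0, …, c_d` and `e_1, …, e_d`
with `c_d = 1` such that in `ℤ[T, T⁻¹]` one has
`T^d * (Σ_{i=0}^d c_i T^i + Σ_{j=1}^d e_j (q T⁻¹)^j) = P(T)`; moreover `e_j = c_j` for all
`1 ≤ j ≤ d`.  (Thus the symmetric polynomial `h(F, V)` associated to `P` has integer
coefficients and satisfies `P(X) = X^d · h(X, q/X)`.) -/
theorem stmt_3 (p r : ℕ) (hp : p.Prime) (hr : 1 ≤ r) (q : ℕ) (hq : q = p ^ r)
    (d : ℕ) (hd : 1 ≤ d) (P : Polynomial ℤ) (hmonic : P.Monic) (hdeg : P.natDegree = 2 * d)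
    (hroots : ∀ z : ℂ, Polynomial.aeval z P = 0 →
      z.im ≠ 0 ∧ ‖z‖ = Real.sqrt q) :
    (∃! ce : (Fin (d + 1) → ℤ) × (Fin d → ℤ), SymmetricCoeffData q d P ce) ∧
    (∀ ce : (Fin (d + 1) → ℤ) × (Fin d → ℤ), SymmetricCoeffData q d P ce →
      ∀ j : Fin d, ce.2 j = ce.1 j.succ) :=
  stmt_3_general q d P hmonic hdeg hroots
end

section
/- Let q be a nonzero integer, d ≥ 1, and let c_0, …, c_{d−1}, e_1, …, e_d be integers with e_d ∈ {1, −1}. Set h = F^d + Σ_{i=0}^{d−1} c_i F^i + Σ_{j=1}^{d} e_j V^j in the polynomial ring ℤ[F,V]. Then the quotient ring ℤ[F,V]/(FV − q, h) is a free ℤ-module of rank 2d, and the residue classes of the 2d monomials F^d, F^{d−1}, …, F, 1, V, …, V^{d−1} form a ℤ-basis of it. -/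
open MvPolynomial

/-- The variable `F` in `ℤ[F, V]`. -/
noncomputable def Fvar : MvPolynomial (Fin 2) ℤ := X 0

/-- The variable `V` in `ℤ[F, V]`. -/
noncomputable def Vvar : MvPolynomial (Fin 2) ℤ := X 1

/-- The polynomial `h = F^d + Σ_{i=0}^{d-1} c_i F^i + Σ_{j=1}^{d} e_j V^j ∈ ℤ[F, V]`. -/
noncomputable def hPoly (d : ℕ) (c e : ℕ → ℤ) : MvPolynomial (Fin 2) ℤ :=
  Fvar ^ d + (∑ i ∈ Finset.range d, C (c i) * Fvar ^ i) +
    ∑ j ∈ Finset.Icc 1 d, C (e j) * Vvar ^ j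

/-!
The classes of the `2d` monomials span the quotient: their span contains `1` and is stable
under multiplication by `F` and `V`, because `FV = q` lowers exponents while `h` (with `e_d` a
unit) rewrites `V^d`, and `F · h` rewrites `F^(d+1)`, in terms of the monomials. They are
linearly independent because the quotient acts on `ℤ^(2d)` through the would-be matrices of
multiplication by `F` and `V` in this basis: these commute, have product `q`, are killed by `h`,
and the monomials send the basis vector of `1` to the `2d` standard basis vectors.
-/

open scoped IsMulCommutative in
noncomputable def MvPolynomial.aevalOfCommute {R S : Type*} [CommRing R] [Ring S] [Algebra R S]
    {a b : S} (h : Commute a b) : MvPolynomial (Fin 2) R →ₐ[R] S :=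
  letI : CommRing (Algebra.adjoin R {a, b}) :=
    have := Algebra.isMulCommutative_adjoin R (s := {a, b}) (by
      rintro x (rfl | rfl) y (rfl | rfl) <;> first | rfl | exact h | exact h.symm)
    inferInstance
  (Algebra.adjoin R {a, b}).val.comp <| aeval
    ![⟨a, Algebra.subset_adjoin (Set.mem_insert _ _)⟩,
      ⟨b, Algebra.subset_adjoin (Set.mem_insert_of_mem _ rfl)⟩]

@[simp] lemma MvPolynomial.aevalOfCommute_X_zero {R S : Type*} [CommRing R] [Ring S]
    [Algebra R S] {a b : S} (h : Commute a b) : aevalOfCommute (R := R) h (X 0) = a := by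
  simp [aevalOfCommute]

@[simp] lemma MvPolynomial.aevalOfCommute_X_one {R S : Type*} [CommRing R] [Ring S]
    [Algebra R S] {a b : S} (h : Commute a b) : aevalOfCommute (R := R) h (X 1) = b := by
  simp [aevalOfCommute]

lemma Submodule.eq_top_of_one_mem_of_mul_X_mem {σ R A : Type*} [CommRing R] [CommRing A]
    [Algebra R A] (π : MvPolynomial σ R →ₐ[R] A) (hπ : Function.Surjective π)
    {N : Submodule R A} (h1 : 1 ∈ N) (hX : ∀ i, ∀ y ∈ N, π (X i) * y ∈ N) : N = ⊤ := by
  refine Submodule.eq_top_iff'.mpr fun x => ?_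
  obtain ⟨p, rfl⟩ := hπ x
  induction p using MvPolynomial.induction_on with
  | C a => simpa [Algebra.algebraMap_eq_smul_one] using N.smul_mem a h1
  | add p p' hp hp' => simpa using add_mem hp hp'
  | mul_X p i hp => simpa [mul_comm] using hX i _ hp

lemma Finset.sum_Icc_eq_sum_Ico_add_of_le {M : Type*} [AddCommMonoid M] {a b : ℕ} (hab : a ≤ b)
    (g : ℕ → M) : ∑ j ∈ Finset.Icc a b, g j = ∑ j ∈ Finset.Ico a b, g j + g b := by
  rw [Finset.Icc_eq_cons_Ico hab, Finset.sum_cons, add_comm]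

lemma mul_pow_succ_of_mul_eq_intCast {A : Type*} [CommRing A] {a b : A} {q : ℤ}
    (h : a * b = q) (n : ℕ) : a * b ^ (n + 1) = q • b ^ n := by
  rw [pow_succ', ← mul_assoc, h, zsmul_eq_mul]

namespace CentralOrder

section Relation

variable (d : ℕ) (c e : ℕ → ℤ)

def hEval {S : Type*} [Ring S] (f v : S) : S :=
  f ^ d + ∑ i ∈ Finset.range d, c i • f ^ i + ∑ j ∈ Finset.Icc 1 d, e j • v ^ j

lemma map_hPoly {S F : Type*} [Ring S] [FunLike F (MvPolynomial (Fin 2) ℤ) S]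
    [RingHomClass F (MvPolynomial (Fin 2) ℤ) S] (φ : F) :
    φ (hPoly d c e) = hEval d c e (φ Fvar) (φ Vvar) := by
  simp [hPoly, hEval, zsmul_eq_mul]

lemma commute_hEval_right {S : Type*} [Ring S] {a f v : S} (hf : Commute a f)
    (hv : Commute a v) : Commute a (hEval d c e f v) :=
  ((hf.pow_right _).add_right (Commute.sum_right _ _ _ fun _ _ => (hf.pow_right _).smul_right _))
    |>.add_right (Commute.sum_right _ _ _ fun _ _ => (hv.pow_right _).smul_right _)

end Relation

def mono {M : Type*} [Monoid M] (f v : M) (d k : ℕ) : M :=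
  if k ≤ d then f ^ (d - k) else v ^ (k - d)

lemma map_mono {M N F : Type*} [Monoid M] [Monoid N] [FunLike F M N] [MonoidHomClass F M N]
    (φ : F) (f v : M) (d k : ℕ) : φ (mono f v d k) = mono (φ f) (φ v) d k := by
  unfold mono
  split_ifs <;> exact map_pow φ _ _

section Spanning

variable {A : Type*} [CommRing A] (f v : A) (d : ℕ)

def monoSpan : Submodule ℤ A := Submodule.span ℤ (Set.range fun i : Fin (2 * d) => mono f v d i)

lemma mono_mem_monoSpan {k : ℕ} (hk : k < 2 * d) : mono f v d k ∈ monoSpan f v d :=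
  Submodule.subset_span ⟨⟨k, hk⟩, rfl⟩

variable {d}

lemma pow_mem_monoSpan_left (hd : 1 ≤ d) {k : ℕ} (hk : k ≤ d) : f ^ k ∈ monoSpan f v d := by
  simpa [mono, Nat.sub_sub_self hk] using mono_mem_monoSpan f v d (k := d - k) (by omega)

lemma pow_mem_monoSpan_right {k : ℕ} (hk : k < d) : v ^ k ∈ monoSpan f v d := by
  rcases k.eq_zero_or_pos with rfl | hk0
  · simpa using pow_mem_monoSpan_left f v (d := d) (by omega) (Nat.zero_le d)
  · simpa [mono, hk0.ne'] using mono_mem_monoSpan f v d (k := d + k) (by omega)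

variable {f v} {q : ℤ} {c e : ℕ → ℤ} (hd : 1 ≤ d) (hfv : f * v = q)
  (hh : hEval d c e f v = 0) (he : IsUnit (e d))
include hd hh

include he in
lemma pow_mem_monoSpan_right_of_le {k : ℕ} (hk : k ≤ d) : v ^ k ∈ monoSpan f v d := by
  rcases hk.lt_or_eq with hk | rfl
  · exact pow_mem_monoSpan_right f v hk
  rw [← Submodule.smul_mem_iff_of_isUnit _ he]
  have h0 : hEval k c e f v ∈ monoSpan f v k := hh ▸ zero_mem _
  rw [hEval, Finset.sum_Icc_eq_sum_Ico_add_of_le hd, ← add_assoc] at h0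
  refine (Submodule.add_mem_iff_right _ (add_mem (add_mem ?_ ?_) ?_)).mp h0
  · exact pow_mem_monoSpan_left f v hd le_rfl
  · exact sum_mem fun i hi => Submodule.smul_mem _ _ <|
      pow_mem_monoSpan_left f v hd (Finset.mem_range.mp hi).le
  · exact sum_mem fun j hj => Submodule.smul_mem _ _ <|
      pow_mem_monoSpan_right f v (Finset.mem_Ico.mp hj).2

include hfv in
lemma pow_mem_monoSpan_left_of_le_succ {k : ℕ} (hk : k ≤ d + 1) : f ^ k ∈ monoSpan f v d := by
  rcases hk.lt_or_eq with hk | rfl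
  · exact pow_mem_monoSpan_left f v hd (Nat.lt_succ_iff.mp hk)
  have h0 : f * hEval d c e f v ∈ monoSpan f v d := by rw [hh, mul_zero]; exact zero_mem _
  rw [hEval, mul_add, mul_add, Finset.mul_sum, Finset.mul_sum, ← pow_succ', add_assoc] at h0
  refine (Submodule.add_mem_iff_left _ (add_mem ?_ ?_)).mp h0
  · refine sum_mem fun i hi => ?_
    rw [mul_smul_comm, ← pow_succ']
    exact Submodule.smul_mem _ _ <| pow_mem_monoSpan_left f v hd (Finset.mem_range.mp hi)
  · refine sum_mem fun j hj => ?_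
    obtain ⟨n, rfl⟩ : ∃ n, j = n + 1 := ⟨j - 1, by grind⟩
    rw [mul_smul_comm, mul_pow_succ_of_mul_eq_intCast hfv, smul_smul]
    exact Submodule.smul_mem _ _ <| pow_mem_monoSpan_right f v (by grind)

include hfv in
lemma mul_mem_monoSpan_left {y : A} (hy : y ∈ monoSpan f v d) : f * y ∈ monoSpan f v d := by
  refine Submodule.span_le (p := (monoSpan f v d).comap (LinearMap.mulLeft ℤ f)) |>.mpr ?_ hy
  rintro _ ⟨⟨k, hk⟩, rfl⟩
  change f * mono f v d k ∈ monoSpan f v d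
  unfold mono
  split_ifs with hkd
  · rw [← pow_succ']
    exact pow_mem_monoSpan_left_of_le_succ hd hfv hh (by omega)
  · obtain ⟨n, hn⟩ : ∃ n, k - d = n + 1 := ⟨k - d - 1, by omega⟩
    rw [hn, mul_pow_succ_of_mul_eq_intCast hfv]
    exact Submodule.smul_mem _ _ <| pow_mem_monoSpan_right f v (by omega)

include hfv he in
lemma mul_mem_monoSpan_right {y : A} (hy : y ∈ monoSpan f v d) : v * y ∈ monoSpan f v d := by
  refine Submodule.span_le (p := (monoSpan f v d).comap (LinearMap.mulLeft ℤ v)) |>.mpr ?_ hy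
  rintro _ ⟨⟨k, hk⟩, rfl⟩
  change v * mono f v d k ∈ monoSpan f v d
  unfold mono
  split_ifs with hkd
  · rcases (d - k).eq_zero_or_pos with h0 | hpos
    · simpa [h0] using pow_mem_monoSpan_right_of_le hd hh he (k := 1) hd
    · obtain ⟨n, hn⟩ : ∃ n, d - k = n + 1 := ⟨d - k - 1, by omega⟩
      rw [hn, mul_pow_succ_of_mul_eq_intCast (mul_comm v f ▸ hfv)]
      exact Submodule.smul_mem _ _ <| pow_mem_monoSpan_left f v hd (by omega)
  · rw [← pow_succ']
    exact pow_mem_monoSpan_right_of_le hd hh he (by omega)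

end Spanning

section Representation

variable (q : ℤ) (d : ℕ) (c e : ℕ → ℤ)

def δ (d m : ℕ) : Fin (2 * d) → ℤ := fun k => if (k : ℕ) = m then 1 else 0

lemma δ_eq_basisFun (k : Fin (2 * d)) : δ d k = Pi.basisFun ℤ (Fin (2 * d)) k := by
  ext j
  simp [δ, Pi.single_apply, Fin.ext_iff]

lemma ext_δ {T T' : Module.End ℤ (Fin (2 * d) → ℤ)}
    (h : ∀ m < 2 * d, T (δ d m) = T' (δ d m)) : T = T' :=
  (Pi.basisFun ℤ _).ext fun k => by rw [← δ_eq_basisFun]; exact h k k.isLt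

/- `δ d k` plays the role of the monomial `mono F V d k`, and `mulF`, `mulV` are multiplication
by `F` and `V` in these coordinates. The two exceptional columns come from
`F^(d+1) = -Σ c_i F^(i+1) - q Σ e_j V^(j-1)` and `V^d = -e_d (F^d + Σ c_i F^i + Σ_{j<d} e_j V^j)`. -/
noncomputable def mulF : Module.End ℤ (Fin (2 * d) → ℤ) :=
  (Pi.basisFun ℤ _).constr ℤ fun k =>
    if (k : ℕ) = 0 then
      -(∑ i ∈ Finset.range d, c i • δ d (d - 1 - i)) -
        q • ∑ j ∈ Finset.Icc 1 d, e j • δ d (d + j - 1)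
    else (if (k : ℕ) ≤ d then 1 else q) • δ d (k - 1)

noncomputable def mulV : Module.End ℤ (Fin (2 * d) → ℤ) :=
  (Pi.basisFun ℤ _).constr ℤ fun k =>
    if (k : ℕ) = 2 * d - 1 then
      -e d • (δ d 0 + ∑ i ∈ Finset.range d, c i • δ d (d - i) +
        ∑ j ∈ Finset.Ico 1 d, e j • δ d (d + j))
    else (if (k : ℕ) < d then q else 1) • δ d (k + 1)

lemma mulF_δ {m : ℕ} (hm : m < 2 * d) : mulF q d c e (δ d m) =
    if m = 0 then
      -(∑ i ∈ Finset.range d, c i • δ d (d - 1 - i)) -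
        q • ∑ j ∈ Finset.Icc 1 d, e j • δ d (d + j - 1)
    else (if m ≤ d then 1 else q) • δ d (m - 1) := by
  rw [δ_eq_basisFun d ⟨m, hm⟩, mulF, Module.Basis.constr_basis]

lemma mulV_δ {m : ℕ} (hm : m < 2 * d) : mulV q d c e (δ d m) =
    if m = 2 * d - 1 then
      -e d • (δ d 0 + ∑ i ∈ Finset.range d, c i • δ d (d - i) +
        ∑ j ∈ Finset.Ico 1 d, e j • δ d (d + j))
    else (if m < d then q else 1) • δ d (m + 1) := by
  rw [δ_eq_basisFun d ⟨m, hm⟩, mulV, Module.Basis.constr_basis]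

lemma mulF_δ_zero (hd : 1 ≤ d) : mulF q d c e (δ d 0) =
    -(∑ i ∈ Finset.range d, c i • δ d (d - 1 - i)) -
      q • ∑ j ∈ Finset.Icc 1 d, e j • δ d (d + j - 1) := by
  simp [mulF_δ q d c e (m := 0) (by omega)]

lemma mulF_δ_of_le {m : ℕ} (hm : 1 ≤ m) (hmd : m ≤ d) :
    mulF q d c e (δ d m) = δ d (m - 1) := by
  rw [mulF_δ q d c e (by omega), if_neg (by omega), if_pos hmd, one_smul]

lemma mulF_δ_of_lt {m : ℕ} (hdm : d < m) (hm : m < 2 * d) :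
    mulF q d c e (δ d m) = q • δ d (m - 1) := by
  rw [mulF_δ q d c e hm, if_neg (by omega), if_neg (by omega)]

lemma mulV_δ_of_lt {m : ℕ} (hm : m < d) : mulV q d c e (δ d m) = q • δ d (m + 1) := by
  rw [mulV_δ q d c e (by omega), if_neg (by omega), if_pos hm]

lemma mulV_δ_of_le {m : ℕ} (hdm : d ≤ m) (hm : m + 1 < 2 * d) :
    mulV q d c e (δ d m) = δ d (m + 1) := by
  rw [mulV_δ q d c e (by omega), if_neg (by omega), if_neg (by omega), one_smul]

lemma mulV_δ_top (hd : 1 ≤ d) : mulV q d c e (δ d (2 * d - 1)) =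
    -e d • (δ d 0 + ∑ i ∈ Finset.range d, c i • δ d (d - i) +
      ∑ j ∈ Finset.Ico 1 d, e j • δ d (d + j)) := by
  simp [mulV_δ q d c e (m := 2 * d - 1) (by omega)]

lemma mulF_pow_δ {k : ℕ} (hk : k ≤ d) : (mulF q d c e ^ k) (δ d d) = δ d (d - k) := by
  induction k with
  | zero => simp
  | succ n ih =>
    rw [pow_succ', Module.End.mul_apply, ih (by omega),
      mulF_δ_of_le q d c e (by omega) (by omega), Nat.sub_sub]

lemma mulV_pow_δ {k : ℕ} (hk : k < d) : (mulV q d c e ^ k) (δ d d) = δ d (d + k) := by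
  induction k with
  | zero => simp
  | succ n ih =>
    rw [pow_succ', Module.End.mul_apply, ih (by omega),
      mulV_δ_of_le q d c e (by omega) (by omega), add_assoc]

lemma mono_mulF_mulV_δ {k : ℕ} (hk : k < 2 * d) :
    mono (mulF q d c e) (mulV q d c e) d k (δ d d) = δ d k := by
  unfold mono
  split_ifs with hkd
  · rw [mulF_pow_δ q d c e (Nat.sub_le d k), Nat.sub_sub_self hkd]
  · rw [mulV_pow_δ q d c e (by omega), Nat.add_sub_cancel' (by omega)]

variable {d} {e} (hd : 1 ≤ d) (he : IsUnit (e d))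
include hd he

lemma mulF_mulV_δ {m : ℕ} (hm : m < 2 * d) :
    mulF q d c e (mulV q d c e (δ d m)) = q • δ d m := by
  rcases lt_or_ge m d with hmd | hdm
  · rw [mulV_δ_of_lt q d c e hmd, map_zsmul, mulF_δ_of_le q d c e (by omega) hmd,
      Nat.add_one_sub_one]
  rcases lt_or_ge (m + 1) (2 * d) with hm' | hm'
  · rw [mulV_δ_of_le q d c e hdm hm', mulF_δ_of_lt q d c e (by omega) hm',
      Nat.add_one_sub_one]
  obtain rfl : m = 2 * d - 1 := by omega
  have hlow : ∀ i ∈ Finset.range d,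
      mulF q d c e (c i • δ d (d - i)) = c i • δ d (d - 1 - i) := fun i hi => by
    rw [map_zsmul, mulF_δ_of_le q d c e (by grind) (by omega), Nat.sub_right_comm]
  have hhigh : ∀ j ∈ Finset.Ico 1 d,
      mulF q d c e (e j • δ d (d + j)) = q • e j • δ d (d + j - 1) := fun j hj => by
    rw [map_zsmul, mulF_δ_of_lt q d c e (by grind) (by grind), smul_comm]
  rw [mulV_δ_top q d c e hd, map_zsmul, map_add, map_add, map_sum, map_sum,
    Finset.sum_congr rfl hlow, Finset.sum_congr rfl hhigh, ← Finset.smul_sum,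
    mulF_δ_zero q d c e hd, Finset.sum_Icc_eq_sum_Ico_add_of_le hd,
    show d + d - 1 = 2 * d - 1 by omega]
  linear_combination (norm := module) (q * Int.isUnit_mul_self he) • δ d (2 * d - 1)

lemma mulV_mulF_δ {m : ℕ} (hm : m < 2 * d) :
    mulV q d c e (mulF q d c e (δ d m)) = q • δ d m := by
  rcases Nat.eq_zero_or_pos m with rfl | hm0
  · have hlow : ∀ i ∈ Finset.range d,
        mulV q d c e (c i • δ d (d - 1 - i)) = q • c i • δ d (d - i) := fun i hi => by
      rw [map_zsmul, mulV_δ_of_lt q d c e (by omega), smul_comm,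
        show d - 1 - i + 1 = d - i by grind]
    have hhigh : ∀ j ∈ Finset.Ico 1 d,
        mulV q d c e (e j • δ d (d + j - 1)) = e j • δ d (d + j) := fun j hj => by
      rw [map_zsmul, mulV_δ_of_le q d c e (by grind) (by grind),
        show d + j - 1 + 1 = d + j by grind]
    rw [mulF_δ_zero q d c e hd, Finset.sum_Icc_eq_sum_Ico_add_of_le hd, map_sub, map_neg,
      map_zsmul, map_add, map_sum, map_sum, Finset.sum_congr rfl hlow, Finset.sum_congr rfl hhigh,
      ← Finset.smul_sum, map_zsmul, show d + d - 1 = 2 * d - 1 by omega, mulV_δ_top q d c e hd]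
    rw [smul_smul, mul_neg, Int.isUnit_mul_self he, neg_smul, one_smul]
    module
  rcases le_or_gt m d with hmd | hdm
  · rw [mulF_δ_of_le q d c e hm0 hmd, mulV_δ_of_lt q d c e (by omega), Nat.sub_add_cancel hm0]
  · rw [mulF_δ_of_lt q d c e hdm hm, map_zsmul, mulV_δ_of_le q d c e (by omega) (by omega),
      Nat.sub_add_cancel hm0]

lemma mulF_mul_mulV : mulF q d c e * mulV q d c e = q • 1 :=
  ext_δ d fun _ hm => mulF_mulV_δ q c hd he hm

lemma mulV_mul_mulF : mulV q d c e * mulF q d c e = q • 1 :=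
  ext_δ d fun _ hm => mulV_mulF_δ q c hd he hm

lemma commute_mulF_mulV : Commute (mulF q d c e) (mulV q d c e) :=
  (mulF_mul_mulV q c hd he).trans (mulV_mul_mulF q c hd he).symm

lemma hEval_mulF_mulV_δ : hEval d c e (mulF q d c e) (mulV q d c e) (δ d d) = 0 := by
  have hlow : ∀ i ∈ Finset.range d,
      (c i • mulF q d c e ^ i) (δ d d) = c i • δ d (d - i) :=
    fun i hi => by rw [LinearMap.smul_apply, mulF_pow_δ q d c e (by grind)]
  have hhigh : ∀ j ∈ Finset.Ico 1 d,
      (e j • mulV q d c e ^ j) (δ d d) = e j • δ d (d + j) :=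
    fun j hj => by rw [LinearMap.smul_apply, mulV_pow_δ q d c e (by grind)]
  have htop : (mulV q d c e ^ d) (δ d d) = mulV q d c e (δ d (2 * d - 1)) := by
    rw [← Nat.sub_add_cancel hd, pow_succ', Module.End.mul_apply, Nat.sub_add_cancel hd,
      mulV_pow_δ q d c e (by omega), show d + (d - 1) = 2 * d - 1 by omega]
  rw [hEval, Finset.sum_Icc_eq_sum_Ico_add_of_le hd, LinearMap.add_apply, LinearMap.add_apply,
    LinearMap.add_apply, LinearMap.sum_apply, LinearMap.sum_apply, Finset.sum_congr rfl hlow,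
    Finset.sum_congr rfl hhigh, LinearMap.smul_apply, htop, mulF_pow_δ q d c e le_rfl,
    mulV_δ_top q d c e hd, Nat.sub_self, smul_smul, mul_neg, Int.isUnit_mul_self he, neg_smul,
    one_smul]
  module

lemma hEval_mulF_mulV : hEval d c e (mulF q d c e) (mulV q d c e) = 0 := by
  have hδ := hEval_mulF_mulV_δ q c hd he
  have hcomm := commute_mulF_mulV q c hd he
  refine ext_δ d fun m hm => ?_
  rw [LinearMap.zero_apply, ← mono_mulF_mulV_δ q d c e hm, ← Module.End.mul_apply]
  unfold mono
  split_ifs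
  · rw [((commute_hEval_right d c e (Commute.refl _) hcomm).pow_left _).eq.symm,
      Module.End.mul_apply, hδ, map_zero]
  · rw [((commute_hEval_right d c e hcomm.symm (Commute.refl _)).pow_left _).eq.symm,
      Module.End.mul_apply, hδ, map_zero]

end Representation

section Quotient

open Ideal.Quotient (mk)

variable (q : ℤ) (d : ℕ) (c e : ℕ → ℤ)

noncomputable abbrev relIdeal : Ideal (MvPolynomial (Fin 2) ℤ) :=
  Ideal.span {Fvar * Vvar - C q, hPoly d c e}

lemma mk_Fvar_mul_mk_Vvar : mk (relIdeal q d c e) Fvar * mk (relIdeal q d c e) Vvar = q := by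
  have h : Fvar * Vvar - C q ∈ relIdeal q d c e := Ideal.subset_span (Set.mem_insert _ _)
  rw [← Ideal.Quotient.eq_zero_iff_mem, map_sub, sub_eq_zero] at h
  simpa using h

lemma hEval_mk_Fvar_mk_Vvar :
    hEval d c e (mk (relIdeal q d c e) Fvar) (mk (relIdeal q d c e) Vvar) = 0 := by
  rw [← map_hPoly, Ideal.Quotient.eq_zero_iff_mem]
  exact Ideal.subset_span (Set.mem_insert_of_mem _ rfl)

variable {d e} (hd : 1 ≤ d) (he : IsUnit (e d))
include hd he

lemma span_mk_mono_eq_top :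
    Submodule.span ℤ (Set.range fun i : Fin (2 * d) => mk (relIdeal q d c e) (mono Fvar Vvar d i))
      = ⊤ := by
  simp_rw [map_mono]
  have hfv := mk_Fvar_mul_mk_Vvar q d c e
  have hh := hEval_mk_Fvar_mk_Vvar q d c e
  refine Submodule.eq_top_of_one_mem_of_mul_X_mem (Ideal.Quotient.mkₐ ℤ _)
    (Ideal.Quotient.mkₐ_surjective ℤ _) ?_ fun i y hy => ?_
  · have h1 := mono_mem_monoSpan (mk (relIdeal q d c e) Fvar) (mk _ Vvar) d (k := d) (by omega)
    rwa [mono, if_pos le_rfl, Nat.sub_self, pow_zero] at h1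
  · fin_cases i
    · exact mul_mem_monoSpan_left hd hfv hh hy
    · exact mul_mem_monoSpan_right hd hfv hh he hy

lemma linearIndependent_mk_mono :
    LinearIndependent ℤ fun i : Fin (2 * d) => mk (relIdeal q d c e) (mono Fvar Vvar d i) := by
  let φ := MvPolynomial.aevalOfCommute (R := ℤ) (commute_mulF_mulV q c hd he)
  have hF : φ Fvar = mulF q d c e := MvPolynomial.aevalOfCommute_X_zero _
  have hV : φ Vvar = mulV q d c e := MvPolynomial.aevalOfCommute_X_one _
  have hφ : ∀ p ∈ relIdeal q d c e, φ p = 0 := by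
    refine fun p hp => Ideal.span_le (I := RingHom.ker φ) |>.mpr ?_ hp
    rintro _ (rfl | rfl)
    · simp [hF, hV, mulF_mul_mulV q c hd he]
    · rw [SetLike.mem_coe, RingHom.mem_ker, map_hPoly, hF, hV]
      exact hEval_mulF_mulV q c hd he
  let ev : (MvPolynomial (Fin 2) ℤ ⧸ relIdeal q d c e) →ₗ[ℤ] Fin (2 * d) → ℤ :=
    (LinearMap.applyₗ (δ d d)).comp (Ideal.Quotient.liftₐ _ φ hφ).toLinearMap
  refine LinearIndependent.of_comp ev ?_
  convert (Pi.basisFun ℤ (Fin (2 * d))).linearIndependent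
  · funext i
    change φ (mono Fvar Vvar d i) (δ d d) = Pi.basisFun ℤ _ i
    rw [map_mono, hF, hV, mono_mulF_mulV_δ q d c e i.isLt, δ_eq_basisFun]
  · -- the two `ℤ`-module structures on `Fin (2 * d) → ℤ` that arise here
    exact Subsingleton.elim _ _

end Quotient

end CentralOrder

open CentralOrder in
theorem stmt_4_general (q : ℤ) (d : ℕ) (hd : 1 ≤ d) (c e : ℕ → ℤ)
    (hed : e d = 1 ∨ e d = -1) :
    Module.Free ℤ
      (MvPolynomial (Fin 2) ℤ ⧸ Ideal.span {Fvar * Vvar - C q, hPoly d c e}) ∧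
    ∃ b : Module.Basis (Fin (2 * d)) ℤ
        (MvPolynomial (Fin 2) ℤ ⧸ Ideal.span {Fvar * Vvar - C q, hPoly d c e}),
      ∀ i : Fin (2 * d),
        b i = Ideal.Quotient.mk (Ideal.span {Fvar * Vvar - C q, hPoly d c e})
          (if (i : ℕ) ≤ d then Fvar ^ (d - (i : ℕ)) else Vvar ^ ((i : ℕ) - d)) := by
  have he : IsUnit (e d) := Int.isUnit_iff.mpr hed
  have hli := linearIndependent_mk_mono q c hd he
  have hsp := (span_mk_mono_eq_top q c hd he).ge
  exact ⟨.of_basis (.mk hli hsp), .mk hli hsp, Module.Basis.mk_apply hli hsp⟩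

/-- Let `q` be a nonzero integer, `d ≥ 1`, and `h` as above with `e_d ∈ {1, -1}`.  Then
`ℤ[F,V]/(FV - q, h)` is a free `ℤ`-module of rank `2d`, and the residue classes of the
monomials `F^d, …, F, 1, V, …, V^{d-1}` form a `ℤ`-basis. -/
theorem stmt_4 (q : ℤ) (hq : q ≠ 0) (d : ℕ) (hd : 1 ≤ d) (c e : ℕ → ℤ)
    (hed : e d = 1 ∨ e d = -1) :
    Module.Free ℤ
      (MvPolynomial (Fin 2) ℤ ⧸ Ideal.span {Fvar * Vvar - C q, hPoly d c e}) ∧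
    ∃ b : Module.Basis (Fin (2 * d)) ℤ
        (MvPolynomial (Fin 2) ℤ ⧸ Ideal.span {Fvar * Vvar - C q, hPoly d c e}),
      ∀ i : Fin (2 * d),
        b i = Ideal.Quotient.mk (Ideal.span {Fvar * Vvar - C q, hPoly d c e})
          (if (i : ℕ) ≤ d then Fvar ^ (d - (i : ℕ)) else Vvar ^ ((i : ℕ) - d)) :=
  stmt_4_general q d hd c e hed
end

section
/- Let q be a nonzero integer and s an integer with s^2 = q. Let d ≥ 1 and let c_0, …, c_{d−1}, e_1, …, e_d be integers with e_d ∈ {1, −1}, and set h₀ = F^d + Σ_{i=0}^{d−1} c_i F^i + Σ_{j=1}^{d} e_j V^j in ℤ[F,V]. Then the quotient ring ℤ[F,V]/(FV − q, h₀·(F − s), h₀·(V − s)) is a free ℤ-module of rank 2d + 1, and the residue classes of the monomials F^d, …, F, 1, V, …, V^d form a ℤ-basis of it. -/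
open MvPolynomial

/-! The classes of `F^i` and `V^i` (`i ≤ d`) span the quotient: since `FV = q`, their span is
stable under multiplication by `F` and `V` as soon as it contains `F^(d+1)` and `V^(d+1)`, and
these are obtained from `h₀ (F - s) = 0` and `h₀ (V - s) = 0` because the coefficients of `F^d`
and `V^d` in `h₀` are units.

They are independent: let `t` be the root of `P = X^d h₀(X, q/X) (X - s)` in `ℚ[X]/(P)`. Since
`P` has degree `2d + 1` and `P(0) = -e_d q^d s ≠ 0`, `t` is a unit, and `F ↦ t`, `V ↦ q/t` kills
the relations (for `V - s` this uses `s² = q`). It sends the family to `t^(-d)` times nonzero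
multiples of `1, t, …, t^(2d)`, which are independent. -/

open scoped Polynomial

section MonomialSpan

variable {A : Type*} [CommRing A]

def monomialSpan (f v : A) (n : ℕ) : Submodule ℤ A :=
  Submodule.span ℤ {x | ∃ i ≤ n, x = f ^ i ∨ x = v ^ i}

lemma monomialSpan_comm (f v : A) (n : ℕ) : monomialSpan f v n = monomialSpan v f n := by
  simp only [monomialSpan, or_comm]

lemma monomialSpan_mono (f v : A) {m n : ℕ} (h : m ≤ n) :
    monomialSpan f v m ≤ monomialSpan f v n :=
  Submodule.span_mono fun _ ⟨i, hi, hx⟩ => ⟨i, hi.trans h, hx⟩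

lemma pow_mem_monomialSpan_left (f v : A) {n i : ℕ} (hi : i ≤ n) :
    f ^ i ∈ monomialSpan f v n :=
  Submodule.subset_span ⟨i, hi, .inl rfl⟩

lemma pow_mem_monomialSpan_right (f v : A) {n i : ℕ} (hi : i ≤ n) :
    v ^ i ∈ monomialSpan f v n :=
  Submodule.subset_span ⟨i, hi, .inr rfl⟩

lemma pow_succ_mul_of_mul_eq {f v : A} {q : ℤ} (hfv : f * v = q) (k : ℕ) :
    v ^ (k + 1) * f = q • v ^ k := by
  rw [zsmul_eq_mul, ← hfv]; ring

lemma mul_mem_of_mem_monomialSpan {f v : A} {q : ℤ} (hfv : f * v = q) {n : ℕ}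
    {P : Submodule ℤ A} (hle : monomialSpan f v n ≤ P) (hf : f ^ (n + 1) ∈ P) {x : A}
    (hx : x ∈ monomialSpan f v n) : x * f ∈ P := by
  have hpow : ∀ i ≤ n, f ^ i * f ∈ P := fun i hi => by
    rw [← pow_succ]
    rcases hi.lt_or_eq with hi | rfl
    · exact hle (pow_mem_monomialSpan_left f v hi)
    · exact hf
  induction hx using Submodule.span_induction with
  | mem x hx =>
    obtain ⟨i, hi, rfl | rfl⟩ := hx
    · exact hpow i hi
    · cases i with
      | zero => simpa using hpow 0 n.zero_le
      | succ k =>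
        rw [pow_succ_mul_of_mul_eq hfv]
        exact P.smul_mem q (hle (pow_mem_monomialSpan_right f v (by omega)))
  | zero => simp
  | add x y _ _ hx hy => rw [add_mul]; exact add_mem hx hy
  | smul a x _ hx => rw [smul_mul_assoc]; exact P.smul_mem a hx

lemma pow_succ_succ_mem_monomialSpan {f v r : A} {q s α β : ℤ} (hfv : f * v = q)
    (hα : IsUnit α) {n : ℕ} (hr : r ∈ monomialSpan f v n)
    (hh : (α * f ^ (n + 1) + β * v ^ (n + 1) + r) * (f - s) = 0) :
    f ^ (n + 2) ∈ monomialSpan f v (n + 1) := by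
  set M := monomialSpan f v (n + 1)
  have hrf : r * f ∈ M := mul_mem_of_mem_monomialSpan hfv (monomialSpan_mono f v n.le_succ)
    (pow_mem_monomialSpan_left f v le_rfl) hr
  have hαf : α • f ^ (n + 2) ∈ M := by
    have : α • f ^ (n + 2) =
        (α * s) • f ^ (n + 1) - (β * q) • v ^ n + (β * s) • v ^ (n + 1) - r * f + s • r := by
      simp only [zsmul_eq_mul]
      push_cast
      linear_combination hh - β * v ^ n * hfv
    rw [this]
    have hrM : r ∈ M := monomialSpan_mono f v n.le_succ hr
    refine add_mem (sub_mem (add_mem (sub_mem ?_ ?_) ?_) hrf) (M.smul_mem _ hrM)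
    · exact M.smul_mem _ (pow_mem_monomialSpan_left f v le_rfl)
    · exact M.smul_mem _ (pow_mem_monomialSpan_right f v n.le_succ)
    · exact M.smul_mem _ (pow_mem_monomialSpan_right f v le_rfl)
  rw [← one_smul ℤ (f ^ (n + 2)), ← Int.isUnit_mul_self hα, mul_smul]
  exact M.smul_mem α hαf

lemma mul_mem_monomialSpan {f v r : A} {q s e : ℤ} (hfv : f * v = q) (he : IsUnit e) {n : ℕ}
    (hr : r ∈ monomialSpan f v n)
    (hF : (f ^ (n + 1) + e * v ^ (n + 1) + r) * (f - s) = 0)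
    (hV : (f ^ (n + 1) + e * v ^ (n + 1) + r) * (v - s) = 0) {x : A}
    (hx : x ∈ monomialSpan f v (n + 1)) :
    x * f ∈ monomialSpan f v (n + 1) ∧ x * v ∈ monomialSpan f v (n + 1) := by
  have hvf : v * f = q := by rw [mul_comm, hfv]
  constructor
  · refine mul_mem_of_mem_monomialSpan hfv le_rfl ?_ hx
    exact pow_succ_succ_mem_monomialSpan (α := 1) hfv isUnit_one hr (by simpa using hF)
  -- with `f` and `v` exchanged, `h` has leading coefficients `e` and `1`
  · rw [monomialSpan_comm] at hx ⊢
    refine mul_mem_of_mem_monomialSpan hvf le_rfl ?_ hx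
    refine pow_succ_succ_mem_monomialSpan (s := s) (β := 1) hvf he (by rwa [monomialSpan_comm]) ?_
    push_cast
    linear_combination hV

def monomialFamily (f v : A) (d : ℕ) (i : Fin (2 * d + 1)) : A :=
  if (i : ℕ) ≤ d then f ^ (d - i) else v ^ ((i : ℕ) - d)

lemma map_monomialFamily {B : Type*} [CommRing B] (φ : A →+* B) (f v : A)
    (d : ℕ) (i : Fin (2 * d + 1)) :
    φ (monomialFamily f v d i) = monomialFamily (φ f) (φ v) d i := by
  simp only [monomialFamily, apply_ite φ, map_pow]

lemma monomialSpan_le_span_range_monomialFamily (f v : A) (d : ℕ) :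
    monomialSpan f v d ≤ Submodule.span ℤ (Set.range (monomialFamily f v d)) := by
  refine Submodule.span_le.2 ?_
  rintro x ⟨i, hi, rfl | rfl⟩
  · exact Submodule.subset_span
      ⟨⟨d - i, by omega⟩, by simp [monomialFamily, Nat.sub_sub_self hi]⟩
  · rcases i.eq_zero_or_pos with rfl | hi0
    · exact Submodule.subset_span ⟨⟨d, by omega⟩, by simp [monomialFamily]⟩
    · exact Submodule.subset_span ⟨⟨d + i, by omega⟩, by simp [monomialFamily]; omega⟩

end MonomialSpan

lemma pow_mul_pow_of_mul_eq {B : Type*} [CommRing B] {t w a : B} (h : t * w = a) {d j : ℕ}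
    (hj : j ≤ d) : t ^ d * w ^ j = a ^ j * t ^ (d - j) := by
  obtain ⟨k, rfl⟩ := Nat.exists_eq_add_of_le hj
  rw [Nat.add_sub_cancel_left, pow_add, ← h, mul_pow]
  ring

lemma linearIndependent_monomialFamily {K B : Type*} [Field K] [CommRing B] [Algebra K B]
    {t w : B} {a : K} (ha : a ≠ 0) (htw : t * w = algebraMap K B a) {d : ℕ}
    (ht : LinearIndependent K fun k : Fin (2 * d + 1) => t ^ (k : ℕ)) :
    LinearIndependent K (monomialFamily t w d) := by
  refine LinearIndependent.of_comp (LinearMap.mulLeft K (t ^ d)) ?_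
  have hrescale : ⇑(LinearMap.mulLeft K (t ^ d)) ∘ monomialFamily t w d =
      (fun i : Fin (2 * d + 1) => Units.mk0 (a ^ ((i : ℕ) - d)) (pow_ne_zero _ ha)) •
        fun i : Fin (2 * d + 1) => t ^ (i.rev : ℕ) := by
    funext i
    simp only [Function.comp_apply, LinearMap.mulLeft_apply, monomialFamily, Pi.smul_apply',
      Units.smul_mk0, Fin.val_rev]
    split_ifs with hi
    · rw [Nat.sub_eq_zero_of_le hi, pow_zero, one_smul, ← pow_add]
      congr 1
      omega
    · rw [pow_mul_pow_of_mul_eq htw (by omega), Algebra.smul_def, map_pow]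
      congr 2
      omega
  rw [hrescale]
  exact (ht.comp Fin.rev Fin.rev_injective).units_smul _

lemma Ideal.Quotient.eq_top_of_mul_mk_X_mem {σ R : Type*} [CommRing R]
    {I : Ideal (MvPolynomial σ R)} (M : Submodule R (MvPolynomial σ R ⧸ I)) (h1 : 1 ∈ M)
    (hX : ∀ x ∈ M, ∀ i, x * Ideal.Quotient.mk I (X i) ∈ M) : M = ⊤ := by
  refine Submodule.eq_top_iff'.2 fun x => ?_
  obtain ⟨p, rfl⟩ := Ideal.Quotient.mk_surjective x
  induction p using MvPolynomial.induction_on with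
  | C a =>
    rw [← MvPolynomial.algebraMap_eq, Ideal.Quotient.mk_algebraMap,
      Algebra.algebraMap_eq_smul_one]
    exact M.smul_mem a h1
  | add p p' hp hp' => rw [map_add]; exact add_mem hp hp'
  | mul_X p i hp => rw [map_mul]; exact hX _ hp i

lemma AdjoinRoot.isUnit_root_of_coeff_zero_ne_zero {K : Type*} [Field K] {P : Polynomial K}
    (h : P.coeff 0 ≠ 0) : IsUnit (AdjoinRoot.root P) := by
  have hdiv : AdjoinRoot.root P * AdjoinRoot.mk P P.divX = AdjoinRoot.of P (-P.coeff 0) := by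
    have := congrArg (AdjoinRoot.mk P) (Polynomial.X_mul_divX_add P)
    rw [AdjoinRoot.mk_self, map_add, map_mul, AdjoinRoot.mk_X, AdjoinRoot.mk_C] at this
    rw [map_neg]
    linear_combination this
  exact isUnit_of_mul_isUnit_left (hdiv ▸ (neg_ne_zero.2 h).isUnit.map _)

lemma AdjoinRoot.linearIndependent_pow_root {K : Type*} [Field K] {P : Polynomial K}
    (hP : P ≠ 0) :
    LinearIndependent K fun k : Fin P.natDegree => AdjoinRoot.root P ^ (k : ℕ) := by
  have := (AdjoinRoot.powerBasis hP).basis.linearIndependent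
  rw [PowerBasis.coe_basis] at this
  exact this

noncomputable abbrev relIdeal (q s : ℤ) (d : ℕ) (c e : ℕ → ℤ) :
    Ideal (MvPolynomial (Fin 2) ℤ) :=
  Ideal.span {Fvar * Vvar - C q, hPoly d c e * (Fvar - C s), hPoly d c e * (Vvar - C s)}

lemma exists_map_hPoly_succ_eq {A : Type*} [CommRing A] (φ : MvPolynomial (Fin 2) ℤ →+* A)
    (n : ℕ) (c e : ℕ → ℤ) : ∃ r ∈ monomialSpan (φ Fvar) (φ Vvar) n,
      φ (hPoly (n + 1) c e) = φ Fvar ^ (n + 1) + e (n + 1) * φ Vvar ^ (n + 1) + r := by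
  refine ⟨∑ i ∈ Finset.range (n + 1), c i • φ Fvar ^ i +
    ∑ j ∈ Finset.Icc 1 n, e j • φ Vvar ^ j, add_mem ?_ ?_, ?_⟩
  · exact Submodule.sum_mem _ fun i hi => Submodule.smul_mem _ _
      (pow_mem_monomialSpan_left _ _ (Nat.lt_succ_iff.1 (Finset.mem_range.1 hi)))
  · exact Submodule.sum_mem _ fun j hj => Submodule.smul_mem _ _
      (pow_mem_monomialSpan_right _ _ (Finset.mem_Icc.1 hj).2)
  · simp only [hPoly, map_add, map_sum, map_mul, map_pow, eq_intCast, map_intCast, zsmul_eq_mul,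
      Finset.sum_Icc_succ_top (Nat.le_add_left 1 n)]
    ring

/-- `X ^ d * h₀(X, q / X)` -/
noncomputable def hPolyNumerator (q : ℤ) (d : ℕ) (c e : ℕ → ℤ) : ℤ[X] :=
  .X ^ (2 * d) + ∑ i ∈ Finset.range d, .C (c i) * .X ^ (d + i) +
    ∑ j ∈ Finset.Icc 1 d, .C (e j * q ^ j) * .X ^ (d - j)

noncomputable def relPoly (q s : ℤ) (d : ℕ) (c e : ℕ → ℤ) : ℤ[X] :=
  hPolyNumerator q d c e * (.X - .C s)

section Relations

variable {q s : ℤ} {d : ℕ} {c e : ℕ → ℤ}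

theorem span_range_monomialFamily_eq_top (hd : 1 ≤ d) (hed : IsUnit (e d)) :
    Submodule.span ℤ (Set.range (monomialFamily (Ideal.Quotient.mk (relIdeal q s d c e) Fvar)
      (Ideal.Quotient.mk (relIdeal q s d c e) Vvar) d)) = ⊤ := by
  obtain ⟨n, rfl⟩ := Nat.exists_eq_add_of_le' hd
  set φ := Ideal.Quotient.mk (relIdeal q s (n + 1) c e)
  have hrel : ∀ p ∈ ({Fvar * Vvar - C q, hPoly (n + 1) c e * (Fvar - C s),
      hPoly (n + 1) c e * (Vvar - C s)} : Set _), φ p = 0 :=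
    fun p hp => Ideal.Quotient.eq_zero_iff_mem.2 (Ideal.subset_span hp)
  obtain ⟨r, hr, hh⟩ := exists_map_hPoly_succ_eq φ n c e
  have hfv : φ Fvar * φ Vvar = q := by
    simpa [sub_eq_zero] using hrel _ (.inl rfl)
  have hF : (φ Fvar ^ (n + 1) + e (n + 1) * φ Vvar ^ (n + 1) + r) * (φ Fvar - s) = 0 := by
    simpa [← hh] using hrel _ (.inr (.inl rfl))
  have hV : (φ Fvar ^ (n + 1) + e (n + 1) * φ Vvar ^ (n + 1) + r) * (φ Vvar - s) = 0 := by
    simpa [← hh] using hrel _ (.inr (.inr rfl))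
  refine top_unique (le_trans ?_ (monomialSpan_le_span_range_monomialFamily _ _ _))
  refine (Ideal.Quotient.eq_top_of_mul_mk_X_mem (monomialSpan (φ Fvar) (φ Vvar) (n + 1))
    (by simpa using pow_mem_monomialSpan_left (φ Fvar) (φ Vvar) (Nat.zero_le (n + 1)))
    fun x hx i => ?_).ge
  fin_cases i
  · exact (mul_mem_monomialSpan hfv hed hr hF hV hx).1
  · exact (mul_mem_monomialSpan hfv hed hr hF hV hx).2

lemma degree_hPolyNumerator_sub_lt (hd : 1 ≤ d) :
    (hPolyNumerator q d c e - .X ^ (2 * d)).degree < ↑(2 * d) := by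
  have hmem : ∀ (a : ℤ) k, k < 2 * d → .C a * .X ^ k ∈ Polynomial.degreeLT ℤ (2 * d) :=
    fun a k hk => Polynomial.mem_degreeLT.2
      ((Polynomial.degree_C_mul_X_pow_le k a).trans_lt (by exact_mod_cast hk))
  rw [← Polynomial.mem_degreeLT, hPolyNumerator, add_assoc, add_sub_cancel_left]
  refine add_mem (Submodule.sum_mem _ fun i hi => hmem _ _ ?_)
    (Submodule.sum_mem _ fun j hj => hmem _ _ ?_)
  · have := Finset.mem_range.1 hi; omega
  · have := (Finset.mem_Icc.1 hj).1; omega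

lemma monic_hPolyNumerator (hd : 1 ≤ d) : (hPolyNumerator q d c e).Monic := by
  simpa using Polynomial.monic_X_pow_add
    (degree_hPolyNumerator_sub_lt (q := q) (c := c) (e := e) hd)

lemma natDegree_hPolyNumerator (hd : 1 ≤ d) : (hPolyNumerator q d c e).natDegree = 2 * d := by
  rw [← add_sub_cancel (.X ^ (2 * d)) (hPolyNumerator q d c e),
    Polynomial.natDegree_add_eq_left_of_degree_lt, Polynomial.natDegree_X_pow]
  rw [Polynomial.degree_X_pow]
  exact degree_hPolyNumerator_sub_lt hd

lemma coeff_zero_hPolyNumerator (hd : 1 ≤ d) :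
    (hPolyNumerator q d c e).coeff 0 = e d * q ^ d := by
  have hd0 : d ≠ 0 := by omega
  simp only [hPolyNumerator, Polynomial.coeff_add, Polynomial.coeff_X_pow,
    Polynomial.finsetSum_coeff, Polynomial.coeff_C_mul]
  rw [Finset.sum_eq_single_of_mem d (Finset.mem_Icc.2 ⟨hd, le_rfl⟩) fun j hj hjd => by
    rw [if_neg (by have := (Finset.mem_Icc.1 hj).2; omega), mul_zero]]
  simp [hd0, eq_comm (a := 0)]

lemma monic_relPoly (hd : 1 ≤ d) : (relPoly q s d c e).Monic :=
  (monic_hPolyNumerator hd).mul (Polynomial.monic_X_sub_C s)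

lemma natDegree_relPoly (hd : 1 ≤ d) : (relPoly q s d c e).natDegree = 2 * d + 1 := by
  rw [relPoly, (monic_hPolyNumerator hd).natDegree_mul (Polynomial.monic_X_sub_C s),
    natDegree_hPolyNumerator hd, Polynomial.natDegree_X_sub_C]

lemma coeff_zero_relPoly_ne_zero (hq : q ≠ 0) (hs : s ^ 2 = q) (hd : 1 ≤ d)
    (hed : IsUnit (e d)) : (relPoly q s d c e).coeff 0 ≠ 0 := by
  have hs0 : s ≠ 0 := by rintro rfl; exact hq (by simpa using hs.symm)
  simp [relPoly, Polynomial.mul_coeff_zero, coeff_zero_hPolyNumerator hd, hed.ne_zero, hq, hs0]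

lemma pow_mul_aeval_hPoly {B : Type*} [CommRing B] {t w : B} (htw : t * w = q) :
    t ^ d * MvPolynomial.aeval ![t, w] (hPoly d c e) =
      Polynomial.aeval t (hPolyNumerator q d c e) := by
  simp only [hPoly, hPolyNumerator, Fvar, Vvar, map_add, map_sum, map_mul, map_pow,
    MvPolynomial.aeval_X, Polynomial.aeval_X, Matrix.cons_val_zero, Matrix.cons_val_one,
    eq_intCast, map_intCast, mul_add, Finset.mul_sum]
  congr 1
  · congr 1
    · ring
    · exact Finset.sum_congr rfl fun i _ => by ring
  · refine Finset.sum_congr rfl fun j hj => ?_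
    rw [mul_left_comm, pow_mul_pow_of_mul_eq htw (Finset.mem_Icc.1 hj).2]
    ring

lemma relIdeal_le_ker_aeval {B : Type*} [CommRing B] {t w : B} (ht : IsUnit t)
    (htw : t * w = q) (hs : s ^ 2 = q)
    (hP : Polynomial.aeval t (relPoly q s d c e) = 0) :
    relIdeal q s d c e ≤ RingHom.ker (MvPolynomial.aeval ![t, w]) := by
  set h := MvPolynomial.aeval ![t, w] (hPoly d c e)
  have hF : h * (t - s) = 0 := by
    refine (ht.pow d).mul_right_eq_zero.1 ?_
    rw [← mul_assoc, pow_mul_aeval_hPoly htw, ← hP]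
    simp [relPoly]
  -- `t (w - s) = s² - s t = -s (t - s)`
  have hV : h * (w - s) = 0 := by
    refine ht.mul_right_eq_zero.1 ?_
    have hs' : (s : B) ^ 2 = q := by rw [← hs, Int.cast_pow]
    linear_combination h * htw - h * hs' - s * hF
  simp only [relIdeal, Ideal.span_le, Set.insert_subset_iff, Set.singleton_subset_iff,
    SetLike.mem_coe, RingHom.mem_ker, map_sub, map_mul, Fvar, Vvar, MvPolynomial.aeval_X,
    Matrix.cons_val_zero, Matrix.cons_val_one, eq_intCast, map_intCast]
  exact ⟨sub_eq_zero.2 htw, hF, hV⟩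

theorem linearIndependent_monomialFamily_quotient
    (hq : q ≠ 0) (hs : s ^ 2 = q) (hd : 1 ≤ d) (hed : IsUnit (e d)) :
    LinearIndependent ℤ (monomialFamily (Ideal.Quotient.mk (relIdeal q s d c e) Fvar)
      (Ideal.Quotient.mk (relIdeal q s d c e) Vvar) d) := by
  set P := (relPoly q s d c e).map (algebraMap ℤ ℚ)
  have hP0 : P.coeff 0 ≠ 0 := by
    simpa [P, Polynomial.coeff_map] using coeff_zero_relPoly_ne_zero hq hs hd hed
  set t := AdjoinRoot.root P
  have ht := AdjoinRoot.isUnit_root_of_coeff_zero_ne_zero hP0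
  set w := ↑ht.unit⁻¹ * (q : AdjoinRoot P)
  have htw : t * w = q := by rw [← mul_assoc, ht.mul_val_inv, one_mul]
  have hker := relIdeal_le_ker_aeval ht htw hs (by
    rw [← Polynomial.aeval_map_algebraMap ℚ, AdjoinRoot.aeval_eq, AdjoinRoot.mk_self])
  set φ := Ideal.Quotient.lift _ (MvPolynomial.aeval ![t, w]).toRingHom
    fun p hp => RingHom.mem_ker.1 (hker hp)
  refine LinearIndependent.of_comp φ.toAddMonoidHom.toIntLinearMap ?_
  have hφ : ⇑φ.toAddMonoidHom.toIntLinearMap ∘ monomialFamily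
      (Ideal.Quotient.mk (relIdeal q s d c e) Fvar) (Ideal.Quotient.mk (relIdeal q s d c e) Vvar) d
      = monomialFamily t w d := by
    funext i
    simp [map_monomialFamily, φ, Fvar, Vvar]
  rw [hφ]
  refine (linearIndependent_monomialFamily (a := (q : ℚ)) (by exact_mod_cast hq)
    (by rw [map_intCast, htw]) ?_).restrict_scalars' ℤ
  have hdeg : P.natDegree = 2 * d + 1 := by
    rw [(monic_relPoly hd).natDegree_map, natDegree_relPoly hd]
  rw [← hdeg]
  exact AdjoinRoot.linearIndependent_pow_root ((monic_relPoly hd).map _).ne_zero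

end Relations

/-- Let `q` be a nonzero integer with `s ^ 2 = q`, `d ≥ 1`, and `h₀` as above with
`e_d ∈ {1, -1}`.  Then `ℤ[F,V]/(FV - q, h₀(F - s), h₀(V - s))` is a free `ℤ`-module of rank
`2d + 1`, and the residue classes of the monomials `F^d, …, F, 1, V, …, V^d` form a
`ℤ`-basis. -/
theorem stmt_5 (q : ℤ) (hq : q ≠ 0) (s : ℤ) (hs : s ^ 2 = q)
    (d : ℕ) (hd : 1 ≤ d) (c e : ℕ → ℤ) (hed : e d = 1 ∨ e d = -1) :
    Module.Free ℤ
      (MvPolynomial (Fin 2) ℤ ⧸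
        Ideal.span {Fvar * Vvar - C q, hPoly d c e * (Fvar - C s),
          hPoly d c e * (Vvar - C s)}) ∧
    ∃ b : Module.Basis (Fin (2 * d + 1)) ℤ
        (MvPolynomial (Fin 2) ℤ ⧸
          Ideal.span {Fvar * Vvar - C q, hPoly d c e * (Fvar - C s),
            hPoly d c e * (Vvar - C s)}),
      ∀ i : Fin (2 * d + 1),
        b i = Ideal.Quotient.mk
          (Ideal.span {Fvar * Vvar - C q, hPoly d c e * (Fvar - C s),
            hPoly d c e * (Vvar - C s)})
          (if (i : ℕ) ≤ d then Fvar ^ (d - (i : ℕ)) else Vvar ^ ((i : ℕ) - d)) := by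
  have hed' : IsUnit (e d) := Int.isUnit_iff.2 hed
  let b := Module.Basis.mk (linearIndependent_monomialFamily_quotient (c := c) hq hs hd hed')
    (span_range_monomialFamily_eq_top (q := q) (s := s) (c := c) hd hed').ge
  refine ⟨.of_basis b, b, fun i => ?_⟩
  rw [Module.Basis.mk_apply]
  exact (map_monomialFamily _ Fvar Vvar d i).symm
end

section
/- Let ℓ be a prime, P ∈ ℤ_ℓ[X] a monic polynomial of positive degree, and R = ℤ_ℓ[X]/(P). For all finitely generated R-modules N and N' that are torsion-free as ℤ_ℓ-modules, the map Hom_R(N, N') → Hom_R(N'^∨, N^∨) sending f to the map φ ↦ φ ∘ f is bijective, where M^∨ = Hom_R(M, R). (Together with reflexivity, this says that the dual-module functor (−)^∨ is an anti-equivalence of the category of finitely generated ℤ_ℓ-torsion-free R-modules with itself.) -/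
set_option maxHeartbeats 1000000

/-- The ring `R = ℤ_ℓ[X]/(P)`. -/
abbrev RquotP (ℓ : ℕ) [Fact ℓ.Prime] (P : Polynomial ℤ_[ℓ]) : Type :=
  Polynomial ℤ_[ℓ] ⧸ Ideal.span {P}


open Module

section Gorenstein
variable {A R : Type} [CommRing A] [CommRing R] [Algebra A R]

/-- `r ↦ (r' ↦ lam (r * r'))`. -/
noncomputable def toDualLam (lam : R →ₗ[A] A) : R →ₗ[A] Module.Dual A R :=
  (LinearMap.llcomp A R R A lam).comp (LinearMap.mul A R)

@[simp] lemma toDualLam_apply (lam : R →ₗ[A] A) (r r' : R) :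
    toDualLam lam r r' = lam (r * r') := rfl

lemma bij_of_isUnit_det {A M M' : Type} [CommRing A] [AddCommGroup M] [Module A M]
    [AddCommGroup M'] [Module A M'] {ι : Type} [Fintype ι] [DecidableEq ι]
    (b : Basis ι A M) (c : Basis ι A M') (f : M →ₗ[A] M')
    (h : IsUnit (LinearMap.toMatrix b c f).det) : Function.Bijective f := by
  have h2 := (LinearEquiv.ofIsUnitDet h).bijective
  have h3 : ⇑f = ⇑(LinearEquiv.ofIsUnitDet h) := by
    funext x
    rw [LinearEquiv.ofIsUnitDet_apply]
  rwa [h3]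

variable {M : Type} [AddCommGroup M] [Module R M] [Module A M] [IsScalarTower A R M]

/-- `Hom_R(M,R) → Hom_A(M,A)`, `φ ↦ lam ∘ φ`. -/
noncomputable def Phi (lam : R →ₗ[A] A) (φ : M →ₗ[R] R) : Module.Dual A M where
  toFun m := lam (φ m)
  map_add' m m' := by
    show lam (φ (m + m')) = lam (φ m) + lam (φ m')
    rw [map_add, map_add]
  map_smul' a m := by
    show lam (φ (a • m)) = a • lam (φ m)
    rw [← algebraMap_smul R a m, map_smul, algebraMap_smul, map_smul]

@[simp] lemma Phi_apply (lam : R →ₗ[A] A) (φ : M →ₗ[R] R) (m : M) :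
    Phi lam φ m = lam (φ m) := rfl

lemma Phi_injective (lam : R →ₗ[A] A) (hbij : Function.Bijective (toDualLam lam)) :
    Function.Injective (Phi (M := M) lam) := by
  intro φ ψ h
  ext m
  apply hbij.injective
  ext r
  simp only [toDualLam_apply]
  have h1 : lam (φ (r • m)) = lam (ψ (r • m)) := by
    rw [show lam (φ (r • m)) = Phi lam φ (r • m) from rfl, h]; rfl
  rw [φ.map_smul, ψ.map_smul, smul_eq_mul, smul_eq_mul, mul_comm r (φ m),
    mul_comm r (ψ m)] at h1
  exact h1

lemma Phi_surjective (lam : R →ₗ[A] A) (hbij : Function.Bijective (toDualLam lam)) :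
    Function.Surjective (Phi (M := M) lam) := by
  intro f
  let e : R ≃ₗ[A] Module.Dual A R := LinearEquiv.ofBijective _ hbij
  let F : M → Module.Dual A R := fun m =>
    { toFun := fun r => f (r • m)
      map_add' := fun r r' => by
        show f ((r + r') • m) = f (r • m) + f (r' • m)
        rw [add_smul, map_add]
      map_smul' := fun a r => by
        show f ((a • r) • m) = a • f (r • m)
        rw [smul_assoc, map_smul] }
  let φfun : M → R := fun m => e.symm (F m)
  have hφ : ∀ m r, lam (φfun m * r) = f (r • m) := by
    intro m r
    have h1 : e (φfun m) = F m := e.apply_symm_apply (F m)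
    calc lam (φfun m * r) = e (φfun m) r := rfl
    _ = F m r := by rw [h1]
    _ = f (r • m) := rfl
  have hadd : ∀ m m', φfun (m + m') = φfun m + φfun m' := by
    intro m m'
    have hF : F (m + m') = F m + F m' := by
      ext r
      show f (r • (m + m')) = f (r • m) + f (r • m')
      rw [smul_add, map_add]
    show e.symm (F (m + m')) = e.symm (F m) + e.symm (F m')
    rw [hF, map_add]
  have hsmul : ∀ (r₀ : R) (m : M), φfun (r₀ • m) = r₀ * φfun m := by
    intro r₀ m
    apply hbij.injective
    ext r
    simp only [toDualLam_apply]
    rw [hφ, show r₀ * φfun m * r = φfun m * (r * r₀) by ring, hφ, mul_smul]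
  refine ⟨{ toFun := φfun, map_add' := hadd, map_smul' := hsmul }, ?_⟩
  ext m
  show lam (φfun m) = f m
  have := hφ m 1
  rwa [mul_one, one_smul] at this

lemma Phi_comp_smul (lam : R →ₗ[A] A) (φ : M →ₗ[R] R) (r : R) (m : M) :
    Phi lam (r • φ) m = Phi lam φ (r • m) := by
  simp only [Phi_apply, LinearMap.smul_apply, map_smul, smul_eq_mul]

/-- Scalar multiplication by `r : R` as an `A`-linear endomorphism. -/
def smulA (r : R) : M →ₗ[A] M where
  toFun m := r • m
  map_add' := smul_add r
  map_smul' a m := by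
    show r • a • m = a • r • m
    rw [← algebraMap_smul R a m, ← mul_smul, mul_comm r _, mul_smul, algebraMap_smul]

@[simp] lemma smulA_apply (r : R) (m : M) : smulA (A := A) r m = r • m := rfl

lemma Phi_comp_smulA (lam : R →ₗ[A] A) (φ : M →ₗ[R] R) (r : R) :
    (Phi lam φ).comp (smulA (A := A) r) = Phi lam (r • φ) := by
  ext m
  rw [LinearMap.comp_apply, smulA_apply, Phi_comp_smul]

/-- `PhiL` bundled as an `A`-linear map. -/
noncomputable def PhiL (lam : R →ₗ[A] A) : (M →ₗ[R] R) →ₗ[A] Module.Dual A M where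
  toFun := Phi lam
  map_add' φ ψ := by
    ext m
    show lam ((φ + ψ) m) = lam (φ m) + lam (ψ m)
    rw [LinearMap.add_apply, map_add]
  map_smul' a φ := by
    ext m
    show lam ((a • φ) m) = a • lam (φ m)
    rw [LinearMap.smul_apply, map_smul]

@[simp] lemma PhiL_apply (lam : R →ₗ[A] A) (φ : M →ₗ[R] R) :
    PhiL (M := M) lam φ = Phi lam φ := rfl

end Gorenstein

theorem exists_lam (ℓ : ℕ) [Fact ℓ.Prime] (P : Polynomial ℤ_[ℓ]) (hP : P.Monic)
    (hdeg : 0 < P.natDegree) :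
    ∃ lam : RquotP ℓ P →ₗ[ℤ_[ℓ]] ℤ_[ℓ], Function.Bijective (toDualLam lam) := by
  set A := ℤ_[ℓ]
  set R := RquotP ℓ P with hR
  let pb : PowerBasis A R := AdjoinRoot.powerBasis' hP
  have hd : 0 < pb.dim := by simpa [pb] using hdeg
  let lam : R →ₗ[A] A := pb.basis.coord ⟨pb.dim - 1, by omega⟩
  have key : ∀ k : ℕ, ∀ hk : k < pb.dim,
      lam (pb.gen ^ k) = if k = pb.dim - 1 then 1 else 0 := by
    intro k hk
    have h1 : pb.gen ^ k = pb.basis ⟨k, hk⟩ := by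
      rw [pb.coe_basis]
    rw [h1]
    simp only [lam, Basis.coord_apply, Basis.repr_self]
    rw [Finsupp.single_apply]
    simp [Fin.ext_iff]
  refine ⟨lam, ?_⟩
  classical
  set Mmat := LinearMap.toMatrix pb.basis pb.basis.dualBasis (toDualLam lam) with hMmat
  have hentry : ∀ i j : Fin pb.dim, Mmat i j = lam (pb.gen ^ (i.val + j.val)) := by
    intro i j
    rw [hMmat, LinearMap.toMatrix_apply, Basis.dualBasis_repr, toDualLam_apply]
    simp only [pb.coe_basis]
    rw [← pow_add, Nat.add_comm]
  have hdet : IsUnit Mmat.det := by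
    set T := Mmat.submatrix id ⇑(Fin.revPerm) with hT
    have hTentry : ∀ i j : Fin pb.dim, T i j = lam (pb.gen ^ (i.val + (pb.dim - 1 - j.val))) := by
      intro i j
      rw [hT]
      simp only [Matrix.submatrix_apply, id_eq, Fin.revPerm_apply]
      rw [hentry]
      congr 2
      simp [Fin.rev]
      omega
    have htri : T.BlockTriangular OrderDual.toDual := by
      intro i j hij
      have hij' : (i : Fin pb.dim) < j := hij
      rw [hTentry]
      rw [key _ (by omega)]
      rw [if_neg (by omega)]
    have hdetT : T.det = 1 := by
      rw [Matrix.det_of_lowerTriangular T htri]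
      apply Finset.prod_eq_one
      intro i _
      rw [hTentry, key _ (by omega), if_pos (by omega)]
    have hperm := Matrix.det_permute' Fin.revPerm Mmat
    rw [← hT] at hperm
    rw [hdetT] at hperm
    have hu : IsUnit (1 : A) := isUnit_one
    rw [hperm] at hu
    exact isUnit_of_mul_isUnit_right hu
  exact bij_of_isUnit_det pb.basis pb.basis.dualBasis (toDualLam lam) hdet

/-- Let `R = ℤ_ℓ[X]/(P)` with `P` monic of positive degree.  For all finitely generated
`ℤ_ℓ`-torsion-free `R`-modules `N`, `N'`, the map `Hom_R(N, N') → Hom_R(N'^∨, N^∨)`,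
`f ↦ (φ ↦ φ ∘ f)`, is bijective.  (Together with reflexivity this says that `(−)^∨` is an
anti-equivalence of the category of finitely generated `ℤ_ℓ`-torsion-free `R`-modules with
itself.) -/
theorem stmt_11 (ℓ : ℕ) [Fact ℓ.Prime] (P : Polynomial ℤ_[ℓ]) (hP : P.Monic)
    (hdeg : 0 < P.natDegree)
    (N : Type) [AddCommGroup N] [Module (RquotP ℓ P) N] [Module.Finite (RquotP ℓ P) N]
    (htfN : ∀ (a : ℤ_[ℓ]) (x : N),
      algebraMap ℤ_[ℓ] (RquotP ℓ P) a • x = 0 → a = 0 ∨ x = 0)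
    (N' : Type) [AddCommGroup N'] [Module (RquotP ℓ P) N'] [Module.Finite (RquotP ℓ P) N']
    (htfN' : ∀ (a : ℤ_[ℓ]) (x : N'),
      algebraMap ℤ_[ℓ] (RquotP ℓ P) a • x = 0 → a = 0 ∨ x = 0) :
    Function.Bijective
      (fun f : N →ₗ[RquotP ℓ P] N' => LinearMap.dualMap f) := by
  classical
  obtain ⟨lam, hlam⟩ := exists_lam ℓ P hP hdeg
  set A := ℤ_[ℓ] with hA
  set R := RquotP ℓ P with hRdef
  -- set up the `A`-module structures
  letI : Module A N := Module.compHom N (algebraMap A R)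
  letI : Module A N' := Module.compHom N' (algebraMap A R)
  haveI : IsScalarTower A R N := ⟨fun a r n => by
    show (a • r) • n = algebraMap A R a • (r • n)
    have h0 : a • r = algebraMap A R a * r := Algebra.smul_def a r
    rw [h0, mul_smul]⟩
  haveI : IsScalarTower A R N' := ⟨fun a r n => by
    show (a • r) • n = algebraMap A R a • (r • n)
    have h0 : a • r = algebraMap A R a * r := Algebra.smul_def a r
    rw [h0, mul_smul]⟩
  haveI : NoZeroSMulDivisors A N := ⟨fun {a x} h => htfN a x h⟩
  haveI : NoZeroSMulDivisors A N' := ⟨fun {a x} h => htfN' a x h⟩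
  haveI : Module.Finite A R := Module.Finite.of_basis (AdjoinRoot.powerBasis' hP).basis
  haveI : Module.Finite A N := Module.Finite.trans R N
  haveI : Module.Finite A N' := Module.Finite.trans R N'
  haveI : Module.Free A N := Module.free_of_finite_type_torsion_free'
  haveI : Module.Free A N' := Module.free_of_finite_type_torsion_free'
  haveI : Module.IsReflexive A N' := inferInstance
  constructor
  · -- injectivity
    intro f₁ f₂ h
    simp only at h
    ext m
    have hsep : ∀ ψ : Module.Dual A N', ψ (f₁ m - f₂ m) = 0 := by
      intro ψ
      obtain ⟨φ, rfl⟩ := Phi_surjective lam hlam ψ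
      have h1 : φ (f₁ m) = φ (f₂ m) := by
        have := congrArg (fun (u : Module.Dual R N' →ₗ[R] Module.Dual R N) => (u φ) m) h
        simpa only [LinearMap.dualMap_apply] using this
      rw [map_sub, Phi_apply, Phi_apply, h1, sub_self]
    have := (Module.forall_dual_apply_eq_zero_iff A (f₁ m - f₂ m)).mp hsep
    exact sub_eq_zero.mp this
  · -- surjectivity
    intro g
    simp only
    let PhiN : (N →ₗ[R] R) ≃ₗ[A] Module.Dual A N :=
      LinearEquiv.ofBijective (PhiL lam) ⟨Phi_injective lam hlam, Phi_surjective lam hlam⟩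
    let PhiN' : (N' →ₗ[R] R) ≃ₗ[A] Module.Dual A N' :=
      LinearEquiv.ofBijective (PhiL lam) ⟨Phi_injective lam hlam, Phi_surjective lam hlam⟩
    let gA : (N' →ₗ[R] R) →ₗ[A] (N →ₗ[R] R) := g.restrictScalars A
    let ghat : Module.Dual A N' →ₗ[A] Module.Dual A N :=
      (PhiN.toLinearMap.comp gA).comp PhiN'.symm.toLinearMap
    have hghat : ∀ ψ : Module.Dual A N', ghat ψ = Phi lam (g (PhiN'.symm ψ)) := fun ψ => rfl
    have hghat' : ∀ φ : N' →ₗ[R] R, ghat (Phi lam φ) = Phi lam (g φ) := by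
      intro φ
      rw [hghat]
      congr 2
      exact PhiN'.symm_apply_apply φ
    -- equivariance of ghat
    have hequiv : ∀ (r : R) (ψ : Module.Dual A N') (n : N),
        ghat (ψ.comp (smulA (A := A) r)) n = ghat ψ (r • n) := by
      intro r ψ n
      obtain ⟨φ, rfl⟩ := Phi_surjective lam hlam ψ
      rw [Phi_comp_smulA, hghat' (r • φ), hghat' φ]
      have : g (r • φ) = r • g φ := map_smul g r φ
      rw [this, ← Phi_comp_smulA]
      rfl
    -- the candidate map
    let f0 : N →ₗ[A] N' :=
      (((Module.evalEquiv A N').symm.toLinearMap).comp ghat.dualMap).comp (Module.Dual.eval A N)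
    have hf0 : ∀ (ψ : Module.Dual A N') (n : N), ψ (f0 n) = ghat ψ n := by
      intro ψ n
      show ψ ((Module.evalEquiv A N').symm (ghat.dualMap (Module.Dual.eval A N n))) = _
      rw [Module.apply_evalEquiv_symm_apply]
      rfl
    have hsmul : ∀ (r : R) (n : N), f0 (r • n) = r • f0 n := by
      intro r n
      have hz : ∀ ψ : Module.Dual A N', ψ (f0 (r • n) - r • f0 n) = 0 := by
        intro ψ
        rw [map_sub, hf0]
        have h2 : ψ (r • f0 n) = (ψ.comp (smulA (A := A) r)) (f0 n) := rfl
        rw [h2, hf0, hequiv r ψ n, sub_self]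
      have := (Module.forall_dual_apply_eq_zero_iff A (f0 (r • n) - r • f0 n)).mp hz
      exact sub_eq_zero.mp this
    let f : N →ₗ[R] N' := { toFun := f0, map_add' := f0.map_add, map_smul' := hsmul }
    refine ⟨f, ?_⟩
    show LinearMap.dualMap f = g
    apply LinearMap.ext
    intro φ
    apply Phi_injective lam hlam
    apply LinearMap.ext
    intro n
    rw [Phi_apply, Phi_apply, LinearMap.dualMap_apply]
    show lam (φ (f0 n)) = lam (g φ n)
    have h3 : lam (φ (f0 n)) = (Phi lam φ) (f0 n) := rfl
    rw [h3, hf0, hghat' φ]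
    rfl
end

section
/- Let ℓ be a prime, P ∈ ℤ_ℓ[X] a monic polynomial of positive degree, and R = ℤ_ℓ[X]/(P). Let ι : N' → N be an injective homomorphism of finitely generated R-modules whose cokernel is torsion-free as a ℤ_ℓ-module. Then the restriction map Hom_R(N, R) → Hom_R(N', R), g ↦ g ∘ ι, is surjective; that is, every R-linear map N' → R extends along ι to an R-linear map N → R. (Equivalently, Ext¹_R(M, R) = 0 for every finitely generated R-module M that is ℤ_ℓ-torsion-free.) -/
theorem Function.Exact.exists_comp_eq_of_projective {A M N P Q : Type*} [Ring A]
    [AddCommGroup M] [Module A M] [AddCommGroup N] [Module A N] [AddCommGroup P] [Module A P]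
    [AddCommGroup Q] [Module A Q] [Module.Projective A P] {f : M →ₗ[A] N} {g : N →ₗ[A] P}
    (h : Function.Exact f g) (hf : Function.Injective f) (hg : Function.Surjective g)
    (φ : M →ₗ[A] Q) : ∃ ψ : N →ₗ[A] Q, ψ ∘ₗ f = φ := by
  obtain ⟨s, hs⟩ := Module.projective_lifting_property g LinearMap.id hg
  obtain ⟨l, hl⟩ := ((h.split_tfae hf hg).out 0 1).mp (⟨s, hs⟩ : ∃ s, g ∘ₗ s = LinearMap.id)
  exact ⟨φ ∘ₗ l, by rw [LinearMap.comp_assoc, hl, LinearMap.comp_id]⟩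

section Frobenius

variable {A R : Type*} [CommSemiring A] [CommSemiring R] [Algebra A R]

def IsFrobeniusForm (lam : R →ₗ[A] A) : Prop :=
  Function.Bijective ((LinearMap.mul A R).compr₂ lam)

namespace IsFrobeniusForm

variable {lam : R →ₗ[A] A} (hlam : IsFrobeniusForm lam)
include hlam

theorem eq_of_apply_mul_eq {x y : R} (h : ∀ t, lam (x * t) = lam (y * t)) : x = y :=
  hlam.1 (LinearMap.ext h)

theorem exists_apply_mul_eq (φ : Module.Dual A R) : ∃ x : R, ∀ t, lam (x * t) = φ t := by
  obtain ⟨x, hx⟩ := hlam.2 φ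
  exact ⟨x, fun t => LinearMap.congr_fun hx t⟩

variable {M : Type*} [AddCommMonoid M] [Module A M] [Module R M] [IsScalarTower A R M]

theorem comp_restrictScalars_injective :
    Function.Injective fun g : M →ₗ[R] R => lam ∘ₗ g.restrictScalars A := by
  intro g g' h
  ext m
  refine hlam.eq_of_apply_mul_eq fun t => ?_
  simpa [mul_comm] using LinearMap.congr_fun h (t • m)

theorem comp_restrictScalars_surjective :
    Function.Surjective fun g : M →ₗ[R] R => lam ∘ₗ g.restrictScalars A := by
  intro f
  choose G hG using fun m : M =>
    hlam.exists_apply_mul_eq (f ∘ₗ (LinearMap.toSpanSingleton R M m).restrictScalars A)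
  simp only [LinearMap.coe_comp, LinearMap.coe_restrictScalars, Function.comp_apply,
    LinearMap.toSpanSingleton_apply] at hG
  refine ⟨{ toFun := G, map_add' := fun x y => ?_, map_smul' := fun r x => ?_ }, ?_⟩
  · exact hlam.eq_of_apply_mul_eq fun t => by simp only [add_mul, map_add, hG, smul_add]
  · refine hlam.eq_of_apply_mul_eq fun t => ?_
    rw [hG, RingHom.id_apply, smul_eq_mul, mul_assoc, mul_left_comm, hG, ← smul_smul, smul_comm]
  · ext m
    simpa using hG m 1

end IsFrobeniusForm

end Frobenius

theorem IsFrobeniusForm.exists_comp_eq {A R : Type*} [CommRing A] [CommRing R] [Algebra A R]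
    {lam : R →ₗ[A] A} (hlam : IsFrobeniusForm lam) {N N' : Type*}
    [AddCommGroup N] [Module A N] [Module R N] [IsScalarTower A R N]
    [AddCommGroup N'] [Module A N'] [Module R N'] [IsScalarTower A R N']
    {ι : N' →ₗ[R] N} (hι : Function.Injective ι) [Module.Projective A (N ⧸ LinearMap.range ι)]
    (f : N' →ₗ[R] R) : ∃ g : N →ₗ[R] R, g ∘ₗ ι = f := by
  obtain ⟨g₀, hg₀⟩ := (LinearMap.exact_map_mkQ_range ι).exists_comp_eq_of_projective
    (f := ι.restrictScalars A) (g := (LinearMap.range ι).mkQ.restrictScalars A) hι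
    (LinearMap.range ι).mkQ_surjective (lam ∘ₗ f.restrictScalars A)
  obtain ⟨g, rfl⟩ := hlam.comp_restrictScalars_surjective g₀
  exact ⟨g, hlam.comp_restrictScalars_injective hg₀⟩

namespace PowerBasis

variable {A S : Type*} [CommRing A] [CommRing S] [Algebra A S]

theorem coord_last_gen_pow (B : PowerBasis A S) (hB : 0 < B.dim) {k : ℕ} (hk : k < B.dim) :
    B.basis.coord ⟨B.dim - 1, by omega⟩ (B.gen ^ k) = if k = B.dim - 1 then 1 else 0 := by
  have : B.gen ^ k = B.basis ⟨k, hk⟩ := by rw [B.coe_basis]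
  rw [this, Module.Basis.coord_apply, Module.Basis.repr_self, Finsupp.single_apply]
  simp only [Fin.ext_iff]

theorem isFrobeniusForm_coord_last (B : PowerBasis A S) (hB : 0 < B.dim) :
    IsFrobeniusForm (B.basis.coord ⟨B.dim - 1, by omega⟩) := by
  set Mm := LinearMap.toMatrix B.basis B.basis.dualBasis
    ((LinearMap.mul A S).compr₂ (B.basis.coord ⟨B.dim - 1, by omega⟩))
  have hentry : ∀ i j : Fin B.dim, (j : ℕ) + i < B.dim →
      Mm i j = if (j : ℕ) + i = B.dim - 1 then 1 else 0 := fun i j h => by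
    simp [Mm, LinearMap.toMatrix_apply, ← B.coord_last_gen_pow hB h, B.coe_basis, pow_add]
  -- reversing the order of the rows makes the Gram matrix unitriangular
  have hrev : (Mm.submatrix Fin.revPerm id).det = 1 := by
    rw [Matrix.det_of_isUpperTriangular]
    · refine Finset.prod_eq_one fun i _ => ?_
      have := Fin.val_rev i
      simp only [Matrix.submatrix_apply, Fin.revPerm_apply, id_eq]
      rw [hentry _ _ (by omega), if_pos (by omega)]
    · intro i j (hij : j < i)
      have := Fin.val_rev i
      simp only [Matrix.submatrix_apply, Fin.revPerm_apply, id_eq]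
      rw [hentry _ _ (by omega), if_neg (by omega)]
  have hdet : IsUnit Mm.det := by
    have h := Matrix.det_permute Fin.revPerm Mm
    rw [hrev] at h
    exact isUnit_of_mul_isUnit_right (h ▸ isUnit_one)
  exact (LinearEquiv.ofIsUnitDet hdet).bijective

theorem exists_isFrobeniusForm (B : PowerBasis A S) : ∃ lam : S →ₗ[A] A, IsFrobeniusForm lam := by
  rcases Nat.eq_zero_or_pos B.dim with hB | hB
  · have : IsEmpty (Fin B.dim) := hB ▸ Fin.isEmpty'
    have : Subsingleton S := B.basis.repr.toEquiv.subsingleton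
    exact ⟨0, Function.injective_of_subsingleton _, fun φ => ⟨0, Subsingleton.elim _ _⟩⟩
  · exact ⟨_, B.isFrobeniusForm_coord_last hB⟩

end PowerBasis

theorem stmt_12_general (ℓ : ℕ) [Fact ℓ.Prime] (P : Polynomial ℤ_[ℓ]) (hP : P.Monic)
    (N : Type) [AddCommGroup N] [Module (RquotP ℓ P) N] [Module.Finite (RquotP ℓ P) N]
    (N' : Type) [AddCommGroup N'] [Module (RquotP ℓ P) N']
    (ι : N' →ₗ[RquotP ℓ P] N) (hinj : Function.Injective ι)
    (hcoker : ∀ (a : ℤ_[ℓ]) (x : N ⧸ LinearMap.range ι),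
      algebraMap ℤ_[ℓ] (RquotP ℓ P) a • x = 0 → a = 0 ∨ x = 0) :
    Function.Surjective
      (fun g : N →ₗ[RquotP ℓ P] RquotP ℓ P => g.comp ι) := by
  let _ : Module ℤ_[ℓ] N := Module.compHom N (algebraMap ℤ_[ℓ] (RquotP ℓ P))
  let _ : Module ℤ_[ℓ] N' := Module.compHom N' (algebraMap ℤ_[ℓ] (RquotP ℓ P))
  have : IsScalarTower ℤ_[ℓ] (RquotP ℓ P) N := IsScalarTower.of_compHom ℤ_[ℓ] (RquotP ℓ P) N
  have : IsScalarTower ℤ_[ℓ] (RquotP ℓ P) N' := IsScalarTower.of_compHom ℤ_[ℓ] (RquotP ℓ P) N'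
  let B : PowerBasis ℤ_[ℓ] (RquotP ℓ P) := AdjoinRoot.powerBasis' hP
  have : Module.Finite ℤ_[ℓ] (RquotP ℓ P) := B.finite
  have : Module.Finite ℤ_[ℓ] (N ⧸ LinearMap.range ι) := Module.Finite.trans (RquotP ℓ P) _
  have : NoZeroSMulDivisors ℤ_[ℓ] (N ⧸ LinearMap.range ι) :=
    ⟨fun h => hcoker _ _ (by rwa [algebraMap_smul])⟩
  have : Module.Free ℤ_[ℓ] (N ⧸ LinearMap.range ι) := Module.free_of_finite_type_torsion_free'
  obtain ⟨lam, hlam⟩ := B.exists_isFrobeniusForm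
  exact hlam.exists_comp_eq hinj

/-- Let `R = ℤ_ℓ[X]/(P)` with `P` monic of positive degree, and let `ι : N' → N` be an
injective homomorphism of finitely generated `R`-modules whose cokernel is torsion-free
over `ℤ_ℓ`.  Then every `R`-linear map `N' → R` extends along `ι` to an `R`-linear map
`N → R`; i.e. the restriction map `Hom_R(N, R) → Hom_R(N', R)` is surjective.
(Equivalently, `Ext¹_R(M, R) = 0` for finitely generated `ℤ_ℓ`-torsion-free `M`.) -/
theorem stmt_12 (ℓ : ℕ) [Fact ℓ.Prime] (P : Polynomial ℤ_[ℓ]) (hP : P.Monic)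
    (hdeg : 0 < P.natDegree)
    (N : Type) [AddCommGroup N] [Module (RquotP ℓ P) N] [Module.Finite (RquotP ℓ P) N]
    (N' : Type) [AddCommGroup N'] [Module (RquotP ℓ P) N'] [Module.Finite (RquotP ℓ P) N']
    (ι : N' →ₗ[RquotP ℓ P] N) (hinj : Function.Injective ι)
    (hcoker : ∀ (a : ℤ_[ℓ]) (x : N ⧸ LinearMap.range ι),
      algebraMap ℤ_[ℓ] (RquotP ℓ P) a • x = 0 → a = 0 ∨ x = 0) :
    Function.Surjective
      (fun g : N →ₗ[RquotP ℓ P] RquotP ℓ P => g.comp ι) :=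
  stmt_12_general ℓ P hP N N' ι hinj hcoker
end

section
/- Let p be a prime with p ≡ 3 (mod 4), and let ℤ[i] be the ring of Gaussian integers with complex conjugation a ↦ ā. Then the set S of 2×2 matrices (a b; c d) with entries in ℤ[i] satisfying p ∣ c and p ∣ (a − d̄) is a subring of the matrix ring M₂(ℤ[i]), and as an additive subgroup of M₂(ℤ[i]) it has index p⁴ (the additive quotient group M₂(ℤ[i])/S has exactly p⁴ elements). -/
/-!
Divisibility by a rational integer `z` in `ℤ√d` is coordinatewise, so `z ℤ√d` has index `z²`.
The two defining conditions of `S` say that the additive map `A ↦ (A₁₀, A₀₀ - star A₁₁)`, which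
is onto `ℤ[i]²`, lands in `(p)²`; hence `S` has index `(p²)² = p⁴`. Closure under products only
needs the modulus to be self-conjugate, so that it also divides `star A₁₀`.
-/

open Matrix

namespace Zsqrtd

variable {d : ℤ}

@[simps]
def reImAddHom : ℤ√d →+ ℤ × ℤ where
  toFun x := (x.re, x.im)
  map_zero' := rfl
  map_add' _ _ := rfl

theorem reImAddHom_surjective : Function.Surjective (reImAddHom (d := d)) :=
  fun ⟨a, b⟩ => ⟨⟨a, b⟩, rfl⟩

theorem span_intCast_toAddSubgroup (z : ℤ) :
    (Ideal.span {(z : ℤ√d)}).toAddSubgroup =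
      ((AddSubgroup.zmultiples z).prod (AddSubgroup.zmultiples z)).comap reImAddHom := by
  ext x
  simp [AddSubgroup.mem_prod, Ideal.mem_span_singleton, intCast_dvd, Int.mem_zmultiples_iff,
    reImAddHom_apply]

theorem index_span_intCast (z : ℤ) :
    (Ideal.span {(z : ℤ√d)}).toAddSubgroup.index = z.natAbs ^ 2 := by
  rw [span_intCast_toAddSubgroup, AddSubgroup.index_comap_of_surjective _ reImAddHom_surjective,
    AddSubgroup.index_prod, Int.index_zmultiples, sq]

end Zsqrtd

namespace Matrix

theorem mul_apply_fin_two {R : Type*} [Semiring R] (A B : Matrix (Fin 2) (Fin 2) R)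
    (i j : Fin 2) :
    (A * B) i j = A i 0 * B 0 j + A i 1 * B 1 j := by
  simp [mul_apply, Fin.sum_univ_two]

variable {R : Type*} [CommRing R] [StarRing R]

def levelStarSubring (q : R) (hq : star q = q) : Subring (Matrix (Fin 2) (Fin 2) R) where
  carrier := {A | q ∣ A 1 0 ∧ q ∣ A 0 0 - star (A 1 1)}
  zero_mem' := by simp
  one_mem' := by simp
  add_mem' := by
    rintro A B ⟨hA₁₀, hA⟩ ⟨hB₁₀, hB⟩
    refine ⟨by simpa using dvd_add hA₁₀ hB₁₀, ?_⟩
    convert dvd_add hA hB using 1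
    simp only [add_apply, star_add]
    ring
  neg_mem' := by
    rintro A ⟨hA₁₀, hA⟩
    refine ⟨by simpa using hA₁₀.neg_right, ?_⟩
    convert hA.neg_right using 1
    simp only [neg_apply, star_neg]
    ring
  mul_mem' := by
    rintro A B ⟨hA₁₀, hA⟩ ⟨hB₁₀, hB⟩
    have hA₁₀' : q ∣ star (A 1 0) := by
      simpa only [starRingEnd_apply, hq] using map_dvd (starRingEnd R) hA₁₀
    have key : (A * B) 0 0 - star ((A * B) 1 1) =
        (A 0 0 - star (A 1 1)) * B 0 0 + star (A 1 1) * (B 0 0 - star (B 1 1)) +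
          A 0 1 * B 1 0 - star (A 1 0) * star (B 0 1) := by
      simp only [mul_apply_fin_two, star_add, star_mul']
      ring
    refine ⟨?_, ?_⟩
    · rw [mul_apply_fin_two]
      exact dvd_add (hA₁₀.mul_right _) (hB₁₀.mul_left _)
    · rw [key]
      exact dvd_sub (dvd_add (dvd_add (hA.mul_right _) (hB.mul_left _)) (hB₁₀.mul_left _))
        (hA₁₀'.mul_right _)

def levelStarAddHom : Matrix (Fin 2) (Fin 2) R →+ R × R where
  toFun A := (A 1 0, A 0 0 - star (A 1 1))
  map_zero' := by simp
  map_add' A B := by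
    ext
    · rfl
    · simp only [add_apply, star_add, Prod.snd_add]
      ring

theorem levelStarAddHom_surjective : Function.Surjective (levelStarAddHom (R := R)) := by
  rintro ⟨x, y⟩
  refine ⟨of ![![y, 0], ![x, 0]], ?_⟩
  simp [levelStarAddHom]

theorem levelStarSubring_toAddSubgroup (q : R) (hq : star q = q) :
    (levelStarSubring q hq).toAddSubgroup =
      ((Ideal.span {q}).toAddSubgroup.prod (Ideal.span {q}).toAddSubgroup).comap
        levelStarAddHom := by
  ext A
  simp [AddSubgroup.mem_prod, Ideal.mem_span_singleton, levelStarAddHom, levelStarSubring]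

theorem index_levelStarSubring (q : R) (hq : star q = q) :
    (levelStarSubring q hq).toAddSubgroup.index = (Ideal.span {q}).toAddSubgroup.index ^ 2 := by
  rw [levelStarSubring_toAddSubgroup,
    AddSubgroup.index_comap_of_surjective _ levelStarAddHom_surjective, AddSubgroup.index_prod, sq]

end Matrix

theorem stmt_14_general (p : ℕ) :
    ∃ S : Subring (Matrix (Fin 2) (Fin 2) GaussianInt),
      (∀ A : Matrix (Fin 2) (Fin 2) GaussianInt,
        A ∈ S ↔ ((p : GaussianInt) ∣ A 1 0 ∧
          (p : GaussianInt) ∣ (A 0 0 - star (A 1 1)))) ∧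
      S.toAddSubgroup.index = p ^ 4 := by
  refine ⟨levelStarSubring (p : GaussianInt) (star_natCast p), fun A => Iff.rfl, ?_⟩
  rw [index_levelStarSubring, ← Int.cast_natCast, Zsqrtd.index_span_intCast, Int.natAbs_natCast]
  ring

/-- Let `p ≡ 3 (mod 4)` be a prime and `ℤ[i]` the Gaussian integers with conjugation
`star`.  The set of matrices `(a b; c d)` over `ℤ[i]` with `p ∣ c` and `p ∣ (a - d̄)` is a
subring of `M₂(ℤ[i])` of additive index `p⁴`. -/
theorem stmt_14 (p : ℕ) (hp : p.Prime) (hmod : p % 4 = 3) :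
    ∃ S : Subring (Matrix (Fin 2) (Fin 2) GaussianInt),
      (∀ A : Matrix (Fin 2) (Fin 2) GaussianInt,
        A ∈ S ↔ ((p : GaussianInt) ∣ A 1 0 ∧
          (p : GaussianInt) ∣ (A 0 0 - star (A 1 1)))) ∧
      S.toAddSubgroup.index = p ^ 4 :=
  stmt_14_general p
end

section
/- Let p be a prime and k a field with p² elements. Let S be the set of 2×2 matrices (a b; 0 d) over k (lower-left entry zero) satisfying a = d^p. Then S is a subring of M₂(k), and the only k-linear subspaces W of k² satisfying A·w ∈ W for all A ∈ S and w ∈ W are: the zero subspace, the line spanned by the first standard basis vector (1,0), and all of k². -/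
private def stmt15S (p : ℕ) (k : Type*) [Field k] [hF : Fact p.Prime] [CharP k p] :
    Subring (Matrix (Fin 2) (Fin 2) k) where
  carrier := {A | A 1 0 = 0 ∧ A 0 0 = A 1 1 ^ p}
  zero_mem' := by simp [zero_pow hF.out.ne_zero]
  one_mem' := by simp
  add_mem' := by
    rintro A B ⟨hA1, hA2⟩ ⟨hB1, hB2⟩
    refine ⟨by simp [hA1, hB1], ?_⟩
    simp only [Matrix.add_apply, hA2, hB2, add_pow_char]
  neg_mem' := by
    rintro A ⟨hA1, hA2⟩
    refine ⟨by simp [hA1], ?_⟩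
    simp only [Matrix.neg_apply, hA2]
    rw [neg_pow, neg_one_pow_char, neg_one_mul]
  mul_mem' := by
    rintro A B ⟨hA1, hA2⟩ ⟨hB1, hB2⟩
    constructor
    · simp [Matrix.mul_apply, Fin.sum_univ_two, hA1, hB1]
    · simp [Matrix.mul_apply, Fin.sum_univ_two, hA1, hB1, hA2, hB2, mul_pow]

/-- Let `k` be a field with `p²` elements.  The set `S` of matrices `(a b; 0 d)` over `k`
with `a = d ^ p` is a subring of `M₂(k)`, and the only `k`-subspaces of `k²` invariant
under `S` are `0`, the line spanned by `(1, 0)`, and all of `k²`. -/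
theorem stmt_15 (p : ℕ) (hp : p.Prime) (k : Type*) [Field k] [Fintype k]
    (hcard : Fintype.card k = p ^ 2) :
    (∃ S : Subring (Matrix (Fin 2) (Fin 2) k),
      ∀ A : Matrix (Fin 2) (Fin 2) k, A ∈ S ↔ (A 1 0 = 0 ∧ A 0 0 = A 1 1 ^ p)) ∧
    (∀ W : Submodule k (Fin 2 → k),
      (∀ A : Matrix (Fin 2) (Fin 2) k, A 1 0 = 0 → A 0 0 = A 1 1 ^ p →
        ∀ w ∈ W, A.mulVec w ∈ W) →
      (W = ⊥ ∨ W = Submodule.span k {![1, 0]} ∨ W = ⊤)) := by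
  have hp0 : p ≠ 0 := hp.ne_zero
  haveI : CharP k p := by
    rcases CharP.exists k with ⟨q, hq⟩
    haveI := hq
    obtain ⟨n, hq', hcard'⟩ := FiniteField.card k q
    have hdvd : q ∣ p ^ 2 := by
      rw [hcard] at hcard'
      exact hcard' ▸ dvd_pow_self q n.ne_zero
    have : q = p := (Nat.prime_dvd_prime_iff_eq hq' hp).mp (hq'.dvd_of_dvd_pow hdvd)
    exact this ▸ hq
  haveI : Fact p.Prime := ⟨hp⟩
  constructor
  · exact ⟨stmt15S p k, fun A => Iff.rfl⟩
  · intro W hW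
    by_cases hbot : W = ⊥
    · exact Or.inl hbot
    right
    have hA : (!![0, 1; 0, 0] : Matrix (Fin 2) (Fin 2) k) 1 0 = 0 := by simp
    have hA' : (!![0, 1; 0, 0] : Matrix (Fin 2) (Fin 2) k) 0 0 =
        (!![0, 1; 0, 0] : Matrix (Fin 2) (Fin 2) k) 1 1 ^ p := by simp [zero_pow hp0]
    have key : ∀ w ∈ W, (![w 1, 0] : Fin 2 → k) ∈ W := by
      intro w hw
      have := hW _ hA hA' w hw
      have hmv : (!![0, 1; 0, 0] : Matrix (Fin 2) (Fin 2) k).mulVec w = ![w 1, 0] := by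
        funext i
        fin_cases i <;>
          simp [Matrix.mulVec, dotProduct, Fin.sum_univ_two, Matrix.vecHead,
            Matrix.vecTail]
      rwa [hmv] at this
    by_cases hy : ∃ w ∈ W, w 1 ≠ 0
    · right
      obtain ⟨w, hw, hw1⟩ := hy
      have he0 : (![1, 0] : Fin 2 → k) ∈ W := by
        have := W.smul_mem (w 1)⁻¹ (key w hw)
        have heq : (w 1)⁻¹ • (![w 1, 0] : Fin 2 → k) = ![1, 0] := by
          funext i
          fin_cases i <;>
            simp [Matrix.vecHead, Matrix.vecTail, inv_mul_cancel₀ hw1]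
        rwa [heq] at this
      have he1 : (![0, 1] : Fin 2 → k) ∈ W := by
        have h2 : w - w 0 • ![1, 0] ∈ W := W.sub_mem hw (W.smul_mem _ he0)
        have h3 : (w 1)⁻¹ • (w - w 0 • ![1, 0]) ∈ W := W.smul_mem _ h2
        have heq : (w 1)⁻¹ • (w - w 0 • (![1, 0] : Fin 2 → k)) = ![0, 1] := by
          funext i
          fin_cases i <;>
            simp [Matrix.vecHead, Matrix.vecTail, inv_mul_cancel₀ hw1]
        rwa [heq] at h3
      refine eq_top_iff.mpr fun v _ => ?_
      have hv : v = v 0 • ![1, 0] + v 1 • ![0, 1] := by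
        funext i
        fin_cases i <;> simp [Matrix.vecHead, Matrix.vecTail]
      rw [hv]
      exact W.add_mem (W.smul_mem _ he0) (W.smul_mem _ he1)
    · left
      push_neg at hy
      obtain ⟨w, hw, hwne⟩ := (Submodule.ne_bot_iff W).mp hbot
      have hw1 : w 1 = 0 := hy w hw
      have hw0 : w 0 ≠ 0 := by
        intro h
        apply hwne
        funext i
        fin_cases i <;> simp [h, hw1]
      apply le_antisymm
      · intro v hv
        have hveq : v = v 0 • ![1, 0] := by
          funext i
          fin_cases i <;> simp [Matrix.vecHead, Matrix.vecTail, hy v hv]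
        rw [hveq]
        exact Submodule.smul_mem _ _ (Submodule.subset_span rfl)
      · rw [Submodule.span_le, Set.singleton_subset_iff]
        have := W.smul_mem (w 0)⁻¹ hw
        have heq : (w 0)⁻¹ • w = ![1, 0] := by
          funext i
          fin_cases i <;> simp [Matrix.vecHead, Matrix.vecTail, inv_mul_cancel₀ hw0, hw1]
        rw [heq] at this
        exact this
end

section
/- Let p be a prime, k a field with p² elements, W = 𝕎(k) the ring of p-typical Witt vectors of k (a complete discrete valuation ring with uniformizer p), K its fraction field, and σ the Witt-vector Frobenius on W. Let S ⊆ M₂(W) be the order of matrices (a b; c d) with c ∈ pW and a − σ(d) ∈ pW, acting on K² by matrix multiplication. Let Λ₂ = W² ⊆ K² and Λ₁ = { (x, y) ∈ W² : y ∈ pW } ⊆ K². Then every finitely generated W-submodule Λ of K² that spans K² over K and satisfies A·Λ ⊆ Λ for all A ∈ S is homothetic to Λ₁ or to Λ₂: there exists t ∈ K× with t·Λ = Λ₁ or t·Λ = Λ₂. Moreover, Λ₁ and Λ₂ are both S-stable. -/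
/-- The standard lattice `Λ₂ = W² ⊆ K²`, where `W = 𝕎(k)` and `K = Frac(W)`. -/
noncomputable def Lambda2 (p : ℕ) [Fact p.Prime] (k : Type) [CommRing k] :
    Submodule (WittVector p k) (Fin 2 → FractionRing (WittVector p k)) :=
  Submodule.span (WittVector p k) {![1, 0], ![0, 1]}

/-- The lattice `Λ₁ = { (x, y) ∈ W² : y ∈ pW } ⊆ K²`, spanned by `(1,0)` and `(0,p)`. -/
noncomputable def Lambda1 (p : ℕ) [Fact p.Prime] (k : Type) [CommRing k] :
    Submodule (WittVector p k) (Fin 2 → FractionRing (WittVector p k)) :=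
  Submodule.span (WittVector p k)
    {![1, 0], ![0, (p : FractionRing (WittVector p k))]}

/-- Scaling by `t ∈ K` as a `W`-linear endomorphism of `K²`. -/
noncomputable def scalingMap (p : ℕ) [Fact p.Prime] (k : Type) [CommRing k]
    (t : FractionRing (WittVector p k)) :
    (Fin 2 → FractionRing (WittVector p k)) →ₗ[WittVector p k]
      (Fin 2 → FractionRing (WittVector p k)) :=
  (LinearMap.lsmul (FractionRing (WittVector p k))
      (Fin 2 → FractionRing (WittVector p k)) t).restrictScalars (WittVector p k)

section Aux
set_option linter.unusedSectionVars false
variable (p : ℕ) [Fact p.Prime] (k : Type) [Field k] [Fintype k] [CharP k p]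

local notation "W" => WittVector p k
local notation "K" => FractionRing (WittVector p k)
local notation "alg" => algebraMap (WittVector p k) (FractionRing (WittVector p k))

lemma smul_apply' (a : W) (v : Fin 2 → K) (i : Fin 2) : (a • v) i = alg a * v i := by
  simp [Algebra.smul_def]

lemma mem_L2 {v : Fin 2 → K} :
    v ∈ Lambda2 p k ↔ (∃ a : W, alg a = v 0) ∧ (∃ b : W, alg b = v 1) := by
  rw [Lambda2, Submodule.mem_span_pair]
  constructor
  · rintro ⟨a, b, rfl⟩
    refine ⟨⟨a, ?_⟩, ⟨b, ?_⟩⟩ <;> simp [smul_apply', Algebra.smul_def]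
  · rintro ⟨⟨a, ha⟩, ⟨b, hb⟩⟩
    refine ⟨a, b, ?_⟩
    funext i
    fin_cases i <;> simp [smul_apply', ha, hb, Algebra.smul_def]

lemma mem_L1 {v : Fin 2 → K} :
    v ∈ Lambda1 p k ↔ (∃ a : W, alg a = v 0) ∧ (∃ b : W, alg (p * b) = v 1) := by
  rw [Lambda1, Submodule.mem_span_pair]
  constructor
  · rintro ⟨a, b, rfl⟩
    refine ⟨⟨a, ?_⟩, ⟨b, ?_⟩⟩ <;>
      simp [smul_apply', Algebra.smul_def, map_mul, mul_comm]
  · rintro ⟨⟨a, ha⟩, ⟨b, hb⟩⟩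
    refine ⟨a, b, ?_⟩
    funext i
    fin_cases i <;>
      simp_all [smul_apply', Algebra.smul_def, map_mul, mul_comm]

lemma fin2_eq (i : Fin 2) : i = 0 ∨ i = 1 := by
  fin_cases i
  exacts [Or.inl rfl, Or.inr rfl]

lemma mulVec_coord (A : Matrix (Fin 2) (Fin 2) W) (v : Fin 2 → K) (i : Fin 2) :
    (A.map alg).mulVec v i = alg (A i 0) * v 0 + alg (A i 1) * v 1 := by
  simp [Matrix.mulVec, dotProduct, Fin.sum_univ_two, Matrix.map_apply]

lemma L2_stable (A : Matrix (Fin 2) (Fin 2) W) {v : Fin 2 → K} (hv : v ∈ Lambda2 p k) :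
    (A.map alg).mulVec v ∈ Lambda2 p k := by
  rw [mem_L2] at hv ⊢
  obtain ⟨⟨a, ha⟩, ⟨b, hb⟩⟩ := hv
  exact ⟨⟨A 0 0 * a + A 0 1 * b, by rw [mulVec_coord]; push_cast [map_mul, map_add, ha, hb]; ring⟩,
    ⟨A 1 0 * a + A 1 1 * b, by rw [mulVec_coord]; push_cast [map_mul, map_add, ha, hb]; ring⟩⟩

lemma L1_stable (A : Matrix (Fin 2) (Fin 2) W) (hc : (p : W) ∣ A 1 0)
    {v : Fin 2 → K} (hv : v ∈ Lambda1 p k) :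
    (A.map alg).mulVec v ∈ Lambda1 p k := by
  rw [mem_L1] at hv ⊢
  obtain ⟨⟨a, ha⟩, ⟨b, hb⟩⟩ := hv
  obtain ⟨c, hcc⟩ := hc
  refine ⟨⟨A 0 0 * a + A 0 1 * (p * b), by
      rw [mulVec_coord]; push_cast [map_mul, map_add, ha, hb]; ring⟩,
    ⟨c * a + A 1 1 * b, by
      rw [mulVec_coord, ← ha, ← hb, hcc]; push_cast [map_mul, map_add]; ring⟩⟩

lemma unit_of_not_dvd {c : W} (h : ¬ (p : W) ∣ c) : IsUnit c := by
  haveI : IsDiscreteValuationRing W := WittVector.isDiscreteValuationRing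
  have hc0 : c ≠ 0 := by rintro rfl; exact h (dvd_zero _)
  obtain ⟨m, u, hu⟩ := IsDiscreteValuationRing.eq_unit_mul_pow_irreducible hc0
    (WittVector.irreducible p)
  cases m with
  | zero => rw [hu, pow_zero, mul_one]; exact u.isUnit
  | succ m => exact absurd ⟨↑u * (p:W)^m, by rw [hu, pow_succ]; ring⟩ h

lemma pE_mem (Λ' : Submodule W (Fin 2 → K))
    (hstable' : ∀ A : Matrix (Fin 2) (Fin 2) W, (p:W) ∣ A 1 0 →
      (p:W) ∣ (A 0 0 - WittVector.frobenius (A 1 1)) →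
      ∀ v ∈ Λ', (A.map alg).mulVec v ∈ Λ')
    (w : Fin 2 → K) (hw : w ∈ Λ') (i₁ : Fin 2) (u : (WittVector p k)ˣ)
    (hwi : w i₁ = alg ↑u) :
    ((p:W) • (![1,0] : Fin 2 → K) ∈ Λ') ∧ ((p:W) • (![0,1] : Fin 2 → K) ∈ Λ') := by
  have huu : (↑u⁻¹ * ↑u : W) = 1 := u.inv_mul
  have hi : i₁ = 0 ∨ i₁ = 1 := by fin_cases i₁ <;> [exact Or.inl rfl; exact Or.inr rfl]
  rcases hi with rfl | rfl
  · constructor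
    · have h := hstable' !![p * ↑u⁻¹, 0; 0, 0] (by simp) (by simp) w hw
      have he : ((!![p * ↑u⁻¹, 0; 0, 0] : Matrix (Fin 2) (Fin 2) W).map alg).mulVec w
          = (p:W) • (![1,0] : Fin 2 → K) := by
        funext i; fin_cases i <;>
          simp [mulVec_coord, smul_apply', Algebra.smul_def, hwi, ← map_mul, mul_assoc, huu]
      rwa [he] at h
    · have h := hstable' !![0, 0; p * ↑u⁻¹, 0] (by simp) (by simp) w hw
      have he : ((!![0, 0; p * ↑u⁻¹, 0] : Matrix (Fin 2) (Fin 2) W).map alg).mulVec w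
          = (p:W) • (![0,1] : Fin 2 → K) := by
        funext i; fin_cases i <;>
          simp [mulVec_coord, smul_apply', Algebra.smul_def, hwi, ← map_mul, mul_assoc, huu]
      rwa [he] at h
  · constructor
    · have h := hstable' !![0, p * ↑u⁻¹; 0, 0] (by simp) (by simp) w hw
      have he : ((!![0, p * ↑u⁻¹; 0, 0] : Matrix (Fin 2) (Fin 2) W).map alg).mulVec w
          = (p:W) • (![1,0] : Fin 2 → K) := by
        funext i; fin_cases i <;>
          simp [mulVec_coord, smul_apply', Algebra.smul_def, hwi, ← map_mul, mul_assoc, huu]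
      rwa [he] at h
    · have hd : ((!![0, 0; 0, p * ↑u⁻¹] : Matrix (Fin 2) (Fin 2) W) 0 0 -
          WittVector.frobenius ((!![0, 0; 0, p * ↑u⁻¹] : Matrix (Fin 2) (Fin 2) W) 1 1))
          = -((p:W) * WittVector.frobenius (↑u⁻¹ : W)) := by
        simp [map_mul]
      have h := hstable' !![0, 0; 0, p * ↑u⁻¹] (by simp)
        (by rw [hd]; exact (dvd_neg).mpr ⟨_, rfl⟩) w hw
      have he : ((!![0, 0; 0, p * ↑u⁻¹] : Matrix (Fin 2) (Fin 2) W).map alg).mulVec w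
          = (p:W) • (![0,1] : Fin 2 → K) := by
        funext i; fin_cases i <;>
          simp [mulVec_coord, smul_apply', Algebra.smul_def, hwi, ← map_mul, mul_assoc, huu]
      rwa [he] at h


lemma main_aux (Λ : Submodule W (Fin 2 → K)) (hfg : Λ.FG)
    (hspan : Submodule.span K (Λ : Set (Fin 2 → K)) = ⊤)
    (hstable : ∀ A : Matrix (Fin 2) (Fin 2) W, (p:W) ∣ A 1 0 →
      (p:W) ∣ (A 0 0 - WittVector.frobenius (A 1 1)) →
      ∀ v ∈ Λ, (A.map alg).mulVec v ∈ Λ) :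
    ∃ t : K, t ≠ 0 ∧ (Submodule.map (scalingMap p k t) Λ = Lambda1 p k ∨
      Submodule.map (scalingMap p k t) Λ = Lambda2 p k) := by
  classical
  haveI : IsDiscreteValuationRing W := WittVector.isDiscreteValuationRing
  have hai : Function.Injective alg := IsFractionRing.injective _ _
  have hp0 : (p : W) ≠ 0 := (WittVector.irreducible p).ne_zero
  have hpK : (p : K) ≠ 0 := by
    intro h
    apply hp0
    apply hai
    rw [map_natCast, map_zero, h]
  -- a nonzero element of Λ
  have hΛbot : Λ ≠ ⊥ := by
    rintro rfl
    have : (⊥ : Submodule K (Fin 2 → K)) = ⊤ := by simpa using hspan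
    exact absurd this bot_ne_top
  obtain ⟨v₀, hv₀Λ, hv₀⟩ := Submodule.exists_mem_ne_zero_of_ne_bot hΛbot
  obtain ⟨i₀, hx₀'⟩ := Function.ne_iff.mp hv₀
  have hx₀ : v₀ i₀ ≠ 0 := by simpa using hx₀' 
  -- clear denominators
  obtain ⟨T, hT⟩ := hfg
  obtain ⟨b, hb⟩ := IsLocalization.exist_integer_multiples_of_finite
    (nonZeroDivisors W) (fun gi : (↑T : Set (Fin 2 → K)) × Fin 2 => (gi.1 : Fin 2 → K) gi.2)
  set t₀ : K := alg ↑b with ht₀def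
  have hb0 : (↑b : W) ≠ 0 := nonZeroDivisors.coe_ne_zero b
  have ht₀ : t₀ ≠ 0 := fun h => hb0 (hai (h.trans (map_zero _).symm))
  have hQ0' : ∀ v ∈ Λ, ∀ i : Fin 2, ∃ a : W, alg a = t₀ * v i := by
    have hle : Λ ≤ Submodule.comap (scalingMap p k t₀) (Lambda2 p k) := by
      rw [← hT, Submodule.span_le]
      intro g hg
      simp only [SetLike.mem_coe, Submodule.mem_comap]
      rw [mem_L2]
      have key : ∀ i : Fin 2, ∃ a : W, alg a = (scalingMap p k t₀ g) i := by
        intro i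
        obtain ⟨a, ha⟩ := hb ⟨⟨g, hg⟩, i⟩
        refine ⟨a, ?_⟩
        rw [ha]
        show (↑b : W) • _ = t₀ * _
        rw [Algebra.smul_def]
      exact ⟨key 0, key 1⟩
    intro v hv i
    have h2 := (mem_L2 p k).mp (hle hv)
    have : ∀ j : Fin 2, (scalingMap p k t₀ v) j = t₀ * v j := fun j => rfl
    rcases fin2_eq i with rfl | rfl
    · obtain ⟨a, ha⟩ := h2.1; exact ⟨a, by rw [ha, this]⟩
    · obtain ⟨a, ha⟩ := h2.2; exact ⟨a, by rw [ha, this]⟩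
  set Q : ℕ → Prop := fun n => ∀ v ∈ Λ, ∀ i : Fin 2, ∃ a : W, alg ((p:W)^n * a) = t₀ * v i
    with hQdef
  haveI : DecidablePred Q := Classical.decPred Q
  have hQ0 : Q 0 := by
    intro v hv i
    obtain ⟨a, ha⟩ := hQ0' v hv i
    exact ⟨a, by rwa [pow_zero, one_mul]⟩
  -- bound
  obtain ⟨a₀, ha₀⟩ := hQ0' v₀ hv₀Λ i₀
  have ha₀0 : a₀ ≠ 0 := by
    intro h
    rw [h, map_zero] at ha₀
    exact (mul_ne_zero ht₀ hx₀) ha₀.symm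
  obtain ⟨m, u₀, hu₀⟩ := IsDiscreteValuationRing.eq_unit_mul_pow_irreducible ha₀0
    (WittVector.irreducible p)
  have hbound : ∀ n, Q n → n ≤ m := by
    intro n hn
    obtain ⟨a, ha⟩ := hn v₀ hv₀Λ i₀
    have he : (p:W)^n * a = ↑u₀ * (p:W)^m := by
      rw [← hu₀]; exact hai (ha.trans ha₀.symm)
    have hdvd : (p:W)^n ∣ ↑u₀ * (p:W)^m := ⟨a, he.symm⟩
    rw [IsUnit.dvd_mul_left u₀.isUnit] at hdvd
    exact (pow_dvd_pow_iff hp0 (WittVector.irreducible p).not_isUnit).mp hdvd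
  set n₀ : ℕ := Nat.findGreatest Q m with hn₀def
  have hQn₀ : Q n₀ := Nat.findGreatest_spec (Nat.zero_le m) hQ0
  have hnot : ¬ Q (n₀ + 1) := fun h =>
    Nat.findGreatest_is_greatest (Nat.lt_succ_self n₀) (hbound _ h) h
  set t : K := t₀ / (p:K)^n₀ with htdef
  have htne : t ≠ 0 := div_ne_zero ht₀ (pow_ne_zero _ hpK)
  have htmul : t * (p:K)^n₀ = t₀ := div_mul_cancel₀ _ (pow_ne_zero _ hpK)
  have hcoord : ∀ v ∈ Λ, ∀ i : Fin 2, ∃ a : W,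
      alg a = t * v i ∧ alg ((p:W)^n₀ * a) = t₀ * v i := by
    intro v hv i
    obtain ⟨a, ha⟩ := hQn₀ v hv i
    refine ⟨a, ?_, ha⟩
    have h2 : (p:K)^n₀ * (t * v i) = (p:K)^n₀ * alg a := by
      rw [← mul_assoc, mul_comm ((p:K)^n₀) t, htmul, ← ha, map_mul, map_pow, map_natCast]
    exact (mul_left_cancel₀ (pow_ne_zero _ hpK) h2).symm
  set Λ' : Submodule W (Fin 2 → K) := Submodule.map (scalingMap p k t) Λ with hΛ'def
  have hmem' : ∀ v ∈ Λ, t • v ∈ Λ' := fun v hv => ⟨v, hv, rfl⟩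
  have hΛ'L2 : ∀ v' ∈ Λ', v' ∈ Lambda2 p k := by
    rintro v' ⟨v, hv, rfl⟩
    rw [mem_L2]
    exact ⟨⟨(hcoord v hv 0).choose, (hcoord v hv 0).choose_spec.1⟩,
      ⟨(hcoord v hv 1).choose, (hcoord v hv 1).choose_spec.1⟩⟩
  have hstable' : ∀ A : Matrix (Fin 2) (Fin 2) W, (p:W) ∣ A 1 0 →
      (p:W) ∣ (A 0 0 - WittVector.frobenius (A 1 1)) →
      ∀ v ∈ Λ', (A.map alg).mulVec v ∈ Λ' := by
    rintro A h1 h2 v' ⟨v, hv, rfl⟩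
    refine ⟨(A.map alg).mulVec v, hstable A h1 h2 v hv, ?_⟩
    show t • _ = (A.map alg).mulVec (t • v)
    rw [Matrix.mulVec_smul]
  -- the element with a unit coordinate
  have hnot' : ¬ ∀ v ∈ Λ, ∀ i : Fin 2, ∃ a : W,
      alg ((p:W)^(n₀+1) * a) = t₀ * v i := hnot
  push_neg at hnot'
  obtain ⟨v₁, hv₁, i₁, hne⟩ := hnot' 
  obtain ⟨c, hc, hc'⟩ := hcoord v₁ hv₁ i₁
  have hw₁ : t • v₁ ∈ Λ' := hmem' v₁ hv₁
  have hwi : (t • v₁) i₁ = alg c := by rw [Pi.smul_apply, smul_eq_mul, ← hc]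
  have hpc : ¬ (p:W) ∣ c := by
    rintro ⟨a, rfl⟩
    refine hne a ?_
    rw [show ((p:W)^(n₀+1) * a : W) = (p:W)^n₀ * ((p:W)*a) by ring]
    exact hc' 
  obtain ⟨u, hu⟩ := unit_of_not_dvd p k hpc
  obtain ⟨hpE0, hpE1⟩ := pE_mem p k Λ' hstable' (t • v₁) hw₁ i₁ u (by rw [hwi, hu])
  refine ⟨t, htne, ?_⟩
  by_cases hcase : ∀ v' ∈ Λ', v' ∈ Lambda1 p k
  · -- Λ' = Λ₁
    left
    have h0p : (![0, (p:K)] : Fin 2 → K) ∈ Λ' := by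
      have he : ((p:W) • (![0,1] : Fin 2 → K)) = ![0, (p:K)] := by
        funext i; fin_cases i <;> simp [smul_apply', Algebra.smul_def, map_natCast]
      rwa [he] at hpE1
    -- i₁ must be 0
    obtain ⟨⟨x, hx⟩, ⟨b₁, hb₁⟩⟩ := (mem_L1 p k).mp (hcase _ hw₁)
    have hi₁ : i₁ = 0 := by
      rcases fin2_eq i₁ with h | h
      · exact h
      · exfalso
        rw [h] at hwi
        exact hpc ⟨b₁, hai (by rw [← hwi, ← hb₁])⟩
    rw [hi₁] at hwi
    have hxc : x = c := hai (by rw [hx, hwi])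
    have he₀ : (![1,0] : Fin 2 → K) ∈ Λ' := by
      have key : (![1,0] : Fin 2 → K)
          = (↑u⁻¹ : W) • (t • v₁) - ((↑u⁻¹ : W) * b₁) • ![0, (p:K)] := by
        funext i
        rcases fin2_eq i with rfl | rfl
        · symm
          simp only [Pi.sub_apply, smul_apply' p k, hwi, ← hu, Matrix.cons_val_zero,
            mul_zero, sub_zero, ← map_mul, u.inv_mul, map_one]
        · symm
          simp only [Pi.sub_apply, smul_apply' p k, ← hb₁, Matrix.cons_val_one,
            Matrix.head_cons, Matrix.cons_val_zero]
          rw [show ((p:K)) = alg (p:W) from (map_natCast _ p).symm,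
            ← map_mul, ← map_mul, ← map_sub,
            show ((↑u⁻¹ : W) * ((p:W) * b₁) - (↑u⁻¹ : W) * b₁ * (p:W) : W) = 0 by ring,
            map_zero]
      rw [key]
      exact Submodule.sub_mem _ (Submodule.smul_mem _ _ hw₁) (Submodule.smul_mem _ _ h0p)
    apply le_antisymm
    · exact fun v' hv' => hcase v' hv'
    · rw [Lambda1, Submodule.span_le, Set.insert_subset_iff, Set.singleton_subset_iff]
      exact ⟨he₀, h0p⟩
  · -- Λ' = Λ₂
    right
    push_neg at hcase
    obtain ⟨w₂, hw₂, hw₂n⟩ := hcase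
    obtain ⟨⟨x, hx⟩, ⟨y, hy⟩⟩ := (mem_L2 p k).mp (hΛ'L2 _ hw₂)
    have hpy : ¬ (p:W) ∣ y := by
      rintro ⟨a, rfl⟩
      exact hw₂n ((mem_L1 p k).mpr ⟨⟨x, hx⟩, ⟨a, hy⟩⟩)
    obtain ⟨u₂, hu₂⟩ := unit_of_not_dvd p k hpy
    have he₀ : (![1,0] : Fin 2 → K) ∈ Λ' := by
      have h := hstable' !![0, 1; 0, 0] (by simp) (by simp) w₂ hw₂
      have he : ((!![0, 1; 0, 0] : Matrix (Fin 2) (Fin 2) W).map alg).mulVec w₂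
          = y • (![1,0] : Fin 2 → K) := by
        funext i; fin_cases i <;> simp [mulVec_coord, smul_apply', Algebra.smul_def, ← hy]
      rw [he] at h
      have h2 := Submodule.smul_mem Λ' (↑u₂⁻¹ : W) h
      rwa [smul_smul, ← hu₂, u₂.inv_mul, one_smul] at h2
    have he₁ : (![0,1] : Fin 2 → K) ∈ Λ' := by
      have h := Submodule.smul_mem Λ' (↑u₂⁻¹ : W)
        (Submodule.sub_mem _ hw₂ (Submodule.smul_mem _ x he₀))
      have he : (↑u₂⁻¹ : W) • (w₂ - x • (![1,0] : Fin 2 → K)) = (![0,1] : Fin 2 → K) := by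
        funext i
        rcases fin2_eq i with rfl | rfl
        · simp only [Pi.sub_apply, smul_apply' p k, ← hx, Matrix.cons_val_zero,
            mul_one, sub_self, mul_zero]
        · simp only [Pi.sub_apply, smul_apply' p k, ← hy, Matrix.cons_val_one,
            Matrix.head_cons, Matrix.cons_val_zero, mul_zero, sub_zero, ← map_mul, ← hu₂, u₂.inv_mul, map_one]
      rwa [he] at h
    apply le_antisymm
    · exact fun v' hv' => hΛ'L2 v' hv'
    · rw [Lambda2, Submodule.span_le, Set.insert_subset_iff, Set.singleton_subset_iff]
      exact ⟨he₀, he₁⟩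

end Aux

/-- Let `k` be a field with `p²` elements, `W = 𝕎(k)`, `K = Frac(W)`, `σ` the Witt-vector
Frobenius, and `S ⊆ M₂(W)` the order of matrices `(a b; c d)` with `p ∣ c` and
`p ∣ a - σ(d)`, acting on `K²`.  Any finitely generated `W`-submodule `Λ` of `K²` spanning
`K²` over `K` and stable under `S` is homothetic to `Λ₁` or `Λ₂`; moreover `Λ₁` and `Λ₂`
are both `S`-stable. -/
theorem stmt_16 (p : ℕ) [Fact p.Prime] (k : Type) [Field k] [Fintype k] [CharP k p]
    (hcard : Fintype.card k = p ^ 2)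
    (Λ : Submodule (WittVector p k) (Fin 2 → FractionRing (WittVector p k)))
    (hfg : Λ.FG)
    (hspan : Submodule.span (FractionRing (WittVector p k))
      (Λ : Set (Fin 2 → FractionRing (WittVector p k))) = ⊤)
    (hstable : ∀ A : Matrix (Fin 2) (Fin 2) (WittVector p k),
      (p : WittVector p k) ∣ A 1 0 →
      (p : WittVector p k) ∣ (A 0 0 - WittVector.frobenius (A 1 1)) →
      ∀ v ∈ Λ,
        (A.map (algebraMap (WittVector p k) (FractionRing (WittVector p k)))).mulVec v ∈ Λ) :
    (∃ t : FractionRing (WittVector p k), t ≠ 0 ∧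
      (Submodule.map (scalingMap p k t) Λ = Lambda1 p k ∨
        Submodule.map (scalingMap p k t) Λ = Lambda2 p k)) ∧
    (∀ A : Matrix (Fin 2) (Fin 2) (WittVector p k),
      (p : WittVector p k) ∣ A 1 0 →
      (p : WittVector p k) ∣ (A 0 0 - WittVector.frobenius (A 1 1)) →
      ∀ v ∈ Lambda1 p k,
        (A.map (algebraMap (WittVector p k) (FractionRing (WittVector p k)))).mulVec v ∈
          Lambda1 p k) ∧
    (∀ A : Matrix (Fin 2) (Fin 2) (WittVector p k),
      (p : WittVector p k) ∣ A 1 0 →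
      (p : WittVector p k) ∣ (A 0 0 - WittVector.frobenius (A 1 1)) →
      ∀ v ∈ Lambda2 p k,
        (A.map (algebraMap (WittVector p k) (FractionRing (WittVector p k)))).mulVec v ∈
          Lambda2 p k) :=
  ⟨main_aux p k Λ hfg hspan hstable,
   fun A h1 _ v hv => L1_stable p k A h1 hv,
   fun A _ _ v hv => L2_stable p k A hv⟩
end
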